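/- arXiv:2403.18404 — 6 statements merged into one kernel-verified Lean document; each statement's English description precedes it below -/
import Mathlib

section
/- For every measurable orthogonal-pair-free set S ⊆ 𝕊² and every real ε > 0, there exists a set S' ∈ ℬ such that μ(S') > μ(S) − ε. Consequently sup{μ(S') : S' ∈ ℬ} = sup{μ(S) : S ⊆ 𝕊² measurable and orthogonal-pair-free}. -/
open Metric Set MeasureTheory Filter
open scoped ENNReal Topology

noncomputable section

abbrev E3 := EuclideanSpace ℝ (Fin 3)

/-- Real inner product on ℝ³. -/
def rinner (p q : E3) : ℝ := inner ℝ p q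

/-- The unit sphere 𝕊² in ℝ³. -/
def sphere2 : Set E3 := Metric.sphere (0 : E3) 1

def northPole : E3 := EuclideanSpace.single (2 : Fin 3) (1 : ℝ)
def southPole : E3 := EuclideanSpace.single (2 : Fin 3) (-1 : ℝ)

/-- Geodesic distance on the sphere: d(p,q) = arccos⟨p,q⟩. -/
def gdist (p q : E3) : ℝ := Real.arccos (rinner p q)

/-- Geodesic distance from a point to a set. -/
def gdistToSet (y : E3) (B : Set E3) : ℝ := sInf (gdist y '' B)

/-- Open geodesic cap/ball of radius r centered at p. -/
def cap (p : E3) (r : ℝ) : Set E3 := {q ∈ sphere2 | gdist p q < r}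

/-- A set is orthogonal-pair-free if no two distinct points of it are orthogonal. -/
def OPF (A : Set E3) : Prop :=
  ∀ p ∈ A, ∀ q ∈ A, p ≠ q → rinner p q ≠ 0

/-- The minor great-circle arc arc(x,y) = {u/‖u‖ : u ∈ [x,y]}. -/
def arc (x y : E3) : Set E3 := (fun u : E3 => ‖u‖⁻¹ • u) '' segment ℝ x y

/-- Spherical convexity. -/
def SphConvex (S : Set E3) : Prop :=
  ∀ x ∈ S, ∀ y ∈ S, x ≠ -y → arc x y ⊆ S

/-- The surface measure σ on 𝕊² (2-dimensional Hausdorff measure, σ(𝕊²) = 4π). -/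
def sigmaM : Measure E3 := MeasureTheory.Measure.hausdorffMeasure 2

/-- The normalized surface measure μ, μ(𝕊²) = 1. -/
def muS : Measure E3 := (ENNReal.ofReal (4 * Real.pi))⁻¹ • sigmaM

/-- 𝒜: orthogonal-pair-free subsets of 𝕊² that are finite unions of pairwise
mutually disjoint (disjoint closures) spherically convex sets. -/
def memA (S : Set E3) : Prop :=
  S ⊆ sphere2 ∧ OPF S ∧
  ∃ (n : ℕ) (C : Fin n → Set E3),
    (∀ i, C i ⊆ sphere2 ∧ SphConvex (C i)) ∧
    (Pairwise fun i j => closure (C i) ∩ closure (C j) = ∅) ∧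
    S = ⋃ i, C i

/-- 𝒜ₖ: as 𝒜 but with at most k convex pieces. -/
def memAk (k : ℕ) (S : Set E3) : Prop :=
  S ⊆ sphere2 ∧ OPF S ∧
  ∃ n : ℕ, n ≤ k ∧ ∃ C : Fin n → Set E3,
    (∀ i, C i ⊆ sphere2 ∧ SphConvex (C i)) ∧
    (Pairwise fun i j => closure (C i) ∩ closure (C j) = ∅) ∧
    S = ⋃ i, C i

/-- Azimuthal angle of the (p₁,p₂) components of a point. -/
def azimuth (p : E3) : ℝ := Complex.arg ((p 0 : ℂ) + (p 1 : ℂ) * Complex.I)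

/-- The azimuthal angle lies in [a,b] modulo 2π. -/
def azIn (p : E3) (a b : ℝ) : Prop :=
  ∃ m : ℤ, a ≤ azimuth p + 2 * Real.pi * (m : ℝ) ∧ azimuth p + 2 * Real.pi * (m : ℝ) ≤ b

/-- The level-k dyadic cell with indices i, j. -/
def dyadicCell (k i j : ℕ) : Set E3 :=
  {p ∈ sphere2 |
    ((i : ℝ) * (2 : ℝ)⁻¹ ^ k - 1 ≤ p 2 ∧ p 2 ≤ ((i : ℝ) + 1) * (2 : ℝ)⁻¹ ^ k - 1) ∧
    azIn p (Real.pi / 2 + (j : ℝ) * Real.pi * (2 : ℝ)⁻¹ ^ k)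
           (Real.pi / 2 + ((j : ℝ) + 1) * Real.pi * (2 : ℝ)⁻¹ ^ k)}

/-- c is a level-k dyadic cell. -/
def IsDyadicCell (k : ℕ) (c : Set E3) : Prop :=
  ∃ i j : ℕ, i < 2 ^ (k + 1) ∧ j < 2 ^ (k + 1) ∧ c = dyadicCell k i j

/-- Interior of c relative to 𝕊². -/
def relInterior (c : Set E3) : Set E3 :=
  {x ∈ sphere2 | ∃ U : Set E3, IsOpen U ∧ x ∈ U ∧ U ∩ sphere2 ⊆ c}

/-- Boundary of c relative to 𝕊². -/
def relBd (c : Set E3) : Set E3 := closure c ∩ closure (sphere2 \ c)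

/-- ℬ: orthogonal-pair-free finite unions of pairwise almost disjoint dyadic cells. -/
def memB (S : Set E3) : Prop :=
  OPF S ∧
  ∃ (n : ℕ) (lev : Fin n → ℕ) (c : Fin n → Set E3),
    (∀ i, IsDyadicCell (lev i) (c i)) ∧
    (Pairwise fun i j => relInterior (c i) ∩ relInterior (c j) = ∅) ∧
    S = ⋃ i, c i

/-- The great circle polar to y. -/
def polarGC (y : E3) : Set E3 := {z ∈ sphere2 | rinner y z = 0}

/-- G(M) = ⋃_{y ∈ M} G(y). -/
def GM (M : Set E3) : Set E3 := ⋃ y ∈ M, polarGC y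

/-- M₁ = {z ∈ 𝕊² : G(z) ⊆ G(M)}. -/
def Mone (M : Set E3) : Set E3 := {z ∈ sphere2 | polarGC z ⊆ GM M}

/-- M₂ = M₁ \ G(M). -/
def Mtwo (M : Set E3) : Set E3 := Mone M \ GM M

/-- x ∼ y: joined by a finite piecewise-geodesic path inside A. -/
def chainRel (A : Set E3) (x y : E3) : Prop :=
  ∃ (m : ℕ) (s : ℕ → E3), s 0 = x ∧ s m = y ∧
    ∀ l, l < m → s l ≠ -s (l + 1) ∧ arc (s l) (s (l + 1)) ⊆ A

/-- Hausdorff distance with respect to the geodesic metric. -/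
def geoHausdorff (U V : Set E3) : ℝ :=
  max (⨆ x ∈ U, gdistToSet x V) (⨆ y ∈ V, gdistToSet y U)

/-- Geodesic distance between two sets. -/
def gsetDist (A B : Set E3) : ℝ := sInf (Set.image2 gdist A B)

/-!
By inner regularity of the finite measure `μ` on `𝕊²`, a measurable orthogonal-pair-free set `S`
contains a compact `K` of almost the same measure. On `K × K` the continuous function
`|⟨p, q⟩|` does not vanish (it is `1` on the diagonal), so it is bounded below by some `δ > 0`.
Dyadic cells of a fine enough level have diameter `< δ / 2`, so the union of the cells meeting
`K` contains `K` and is still orthogonal-pair-free. Cells of one level have disjoint relative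
interiors: on a relatively open piece of two of them, the height or the longitude would be
confined to a discrete grid.
-/

open Real

lemma mem_sphere2_iff {p : E3} : p ∈ sphere2 ↔ p 0 ^ 2 + p 1 ^ 2 + p 2 ^ 2 = 1 := by
  rw [sphere2, mem_sphere_zero_iff_norm, EuclideanSpace.norm_eq, Fin.sum_univ_three,
    sqrt_eq_one]
  simp only [Real.norm_eq_abs, sq_abs]

lemma rinner_eq (p q : E3) : rinner p q = p 0 * q 0 + p 1 * q 1 + p 2 * q 2 := by
  simp only [rinner, PiLp.inner_apply, RCLike.inner_apply, conj_trivial, Fin.sum_univ_three]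
  ring

lemma rinner_self_of_mem_sphere2 {p : E3} (hp : p ∈ sphere2) : rinner p p = 1 := by
  rw [rinner_eq, ← mem_sphere2_iff.1 hp]; ring

lemma abs_coord_two_le_one {p : E3} (hp : p ∈ sphere2) : |p 2| ≤ 1 := by
  have := mem_sphere2_iff.1 hp
  exact (sq_le_one_iff_abs_le_one _).1 (by nlinarith [sq_nonneg (p 0), sq_nonneg (p 1)])

lemma abs_rinner_sub_rinner_le {p q p₀ q₀ : E3} (hq : q ∈ sphere2) (hp₀ : p₀ ∈ sphere2) :
    |rinner p q - rinner p₀ q₀| ≤ dist p p₀ + dist q q₀ := by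
  have hdecomp : rinner p q - rinner p₀ q₀ = inner ℝ (p - p₀) q + inner ℝ p₀ (q - q₀) := by
    simp only [rinner, inner_sub_left, inner_sub_right]; ring
  rw [hdecomp, dist_eq_norm, dist_eq_norm]
  calc _ ≤ ‖p - p₀‖ * ‖q‖ + ‖p₀‖ * ‖q - q₀‖ :=
        (abs_add_le _ _).trans
          (add_le_add (abs_real_inner_le_norm _ _) (abs_real_inner_le_norm _ _))
    _ = _ := by rw [mem_sphere_zero_iff_norm.1 hq, mem_sphere_zero_iff_norm.1 hp₀]; ring

-- Dyadic cells are boxes in these height/longitude coordinates.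
def sphPoint (z θ : ℝ) : E3 := !₂[√(1 - z ^ 2) * cos θ, √(1 - z ^ 2) * sin θ, z]

@[simp] lemma sphPoint_zero (z θ : ℝ) : sphPoint z θ 0 = √(1 - z ^ 2) * cos θ := rfl
@[simp] lemma sphPoint_one (z θ : ℝ) : sphPoint z θ 1 = √(1 - z ^ 2) * sin θ := rfl
@[simp] lemma sphPoint_two (z θ : ℝ) : sphPoint z θ 2 = z := rfl

lemma continuous_sphPoint : Continuous fun v : ℝ × ℝ => sphPoint v.1 v.2 := by
  unfold sphPoint; fun_prop

lemma sphPoint_mem_sphere2 {z : ℝ} (hz : |z| ≤ 1) (θ : ℝ) : sphPoint z θ ∈ sphere2 := by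
  have h : √(1 - z ^ 2) ^ 2 = 1 - z ^ 2 := sq_sqrt (by nlinarith [sq_abs z, abs_nonneg z])
  rw [mem_sphere2_iff, sphPoint_zero, sphPoint_one, sphPoint_two, mul_pow, mul_pow, h]
  linear_combination (1 - z ^ 2) * sin_sq_add_cos_sq θ

lemma sphPoint_congr_angle (z : ℝ) {θ θ' : ℝ} (h : (θ : Angle) = θ') :
    sphPoint z θ = sphPoint z θ' := by
  rw [sphPoint, sphPoint, ← Angle.cos_coe, ← Angle.sin_coe, h, Angle.cos_coe, Angle.sin_coe]

lemma sphPoint_coord_two_azimuth {p : E3} (hp : p ∈ sphere2) :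
    sphPoint (p 2) (azimuth p) = p := by
  set w : ℂ := (p 0 : ℂ) + (p 1 : ℂ) * Complex.I
  have hw : ‖w‖ = √(1 - p 2 ^ 2) := by
    rw [← mem_sphere2_iff.1 hp, Complex.norm_eq_sqrt_sq_add_sq]
    simp [w]
  ext i
  fin_cases i
  · change √(1 - p 2 ^ 2) * cos (azimuth p) = p 0
    rw [← hw, azimuth, Complex.norm_mul_cos_arg]; simp [w]
  · change √(1 - p 2 ^ 2) * sin (azimuth p) = p 1
    rw [← hw, azimuth, Complex.norm_mul_sin_arg]; simp [w]
  · rfl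

lemma coe_azimuth_sphPoint {z : ℝ} (hz : |z| < 1) (θ : ℝ) :
    (azimuth (sphPoint z θ) : Angle) = θ := by
  have hr : 0 < √(1 - z ^ 2) := sqrt_pos.2 (by nlinarith [sq_abs z, abs_nonneg z])
  have : (sphPoint z θ 0 : ℂ) + (sphPoint z θ 1 : ℂ) * Complex.I
      = (√(1 - z ^ 2) : ℂ) * Complex.exp (θ * Complex.I) := by
    rw [Complex.exp_mul_I]; simp; ring
  rw [azimuth, this, Complex.arg_real_mul _ hr, Complex.arg_exp_mul_I, Angle.coe_toIocMod]

lemma azIn_iff {p : E3} {a b : ℝ} : azIn p a b ↔ ∃ θ ∈ Icc a b, (θ : Angle) = azimuth p := by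
  simp only [azIn, Angle.angle_eq_iff_two_pi_dvd_sub, mem_Icc]
  constructor
  · rintro ⟨m, h⟩
    exact ⟨_, h, m, by ring⟩
  · rintro ⟨θ, h, m, hm⟩
    obtain rfl : θ = azimuth p + 2 * π * m := by linarith
    exact ⟨m, h⟩

lemma exists_nat_lt_mem_Icc {x : ℝ} {N : ℕ} (h0 : 0 ≤ x) (hN : x ≤ N) (hN0 : 0 < N) :
    ∃ i : ℕ, i < N ∧ (i : ℝ) ≤ x ∧ x ≤ i + 1 := by
  rcases lt_or_ge ⌊x⌋₊ N with h | h
  · exact ⟨⌊x⌋₊, h, Nat.floor_le h0, (Nat.lt_floor_add_one x).le⟩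
  · have hx : x = N := le_antisymm hN ((Nat.cast_le.2 h).trans (Nat.floor_le h0))
    refine ⟨N - 1, by omega, ?_, ?_⟩ <;> rw [Nat.cast_pred hN0] <;> linarith

lemma exists_sphPoint_eq_of_mem_dyadicCell {k i j : ℕ} {p : E3} (hp : p ∈ dyadicCell k i j) :
    ∃ θ ∈ Icc (π / 2 + j * π * (2 : ℝ)⁻¹ ^ k) (π / 2 + (j + 1) * π * (2 : ℝ)⁻¹ ^ k),
      sphPoint (p 2) θ = p := by
  obtain ⟨θ, hθ, hθp⟩ := azIn_iff.1 hp.2.2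
  exact ⟨θ, hθ, (sphPoint_congr_angle _ hθp).trans (sphPoint_coord_two_azimuth hp.1)⟩

lemma exists_mem_dyadicCell (k : ℕ) {p : E3} (hp : p ∈ sphere2) :
    ∃ i j : ℕ, i < 2 ^ (k + 1) ∧ j < 2 ^ (k + 1) ∧ p ∈ dyadicCell k i j := by
  have hπ := pi_pos
  have hk : (2 : ℝ)⁻¹ ^ k * 2 ^ k = 1 := by simp
  have hN : (0 : ℕ) < 2 ^ (k + 1) := by positivity
  have hNR : ((2 ^ (k + 1) : ℕ) : ℝ) = 2 * 2 ^ k := by push_cast; ring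
  obtain ⟨hz1, hz2⟩ := abs_le.1 (abs_coord_two_le_one hp)
  obtain ⟨i, hi, hi1, hi2⟩ := exists_nat_lt_mem_Icc (x := (p 2 + 1) * 2 ^ k)
    (mul_nonneg (by linarith) (by positivity)) (by rw [hNR]; gcongr; linarith) hN
  set θ := toIcoMod two_pi_pos (π / 2) (azimuth p)
  obtain ⟨hθ1, hθ2⟩ := toIcoMod_mem_Ico two_pi_pos (π / 2) (azimuth p)
  obtain ⟨j, hj, hj1, hj2⟩ := exists_nat_lt_mem_Icc (x := (θ - π / 2) * 2 ^ k / π)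
    (div_nonneg (mul_nonneg (by linarith) (by positivity)) hπ.le)
    (by rw [hNR, div_le_iff₀ hπ]; nlinarith) hN
  refine ⟨i, j, hi, hj, hp, ⟨?_, ?_⟩, azIn_iff.2 ⟨θ, ⟨?_, ?_⟩, Angle.coe_toIcoMod _ _⟩⟩
  · linear_combination (2 : ℝ)⁻¹ ^ k * hi1 + (p 2 + 1) * hk
  · linear_combination (2 : ℝ)⁻¹ ^ k * hi2 - (p 2 + 1) * hk
  · rw [le_div_iff₀ hπ] at hj1
    linear_combination (2 : ℝ)⁻¹ ^ k * hj1 + (θ - π / 2) * hk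
  · rw [div_le_iff₀ hπ] at hj2
    linear_combination (2 : ℝ)⁻¹ ^ k * hj2 - (θ - π / 2) * hk

lemma exists_level_dist_lt {η : ℝ} (hη : 0 < η) :
    ∃ k : ℕ, ∀ i j : ℕ, j < 2 ^ (k + 1) →
      ∀ p ∈ dyadicCell k i j, ∀ q ∈ dyadicCell k i j, dist p q < η := by
  have hπ := pi_pos
  obtain ⟨δ, hδ, hunif⟩ := Metric.uniformContinuousOn_iff.1
    (((isCompact_Icc (a := (-1 : ℝ)) (b := 1)).prod
      (isCompact_Icc (a := π / 2) (b := π / 2 + 2 * π))).uniformContinuousOn_of_continuous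
      continuous_sphPoint.continuousOn) η hη
  obtain ⟨k, hk⟩ := exists_pow_lt_of_lt_one (div_pos hδ hπ) (by norm_num : (2 : ℝ)⁻¹ < 1)
  refine ⟨k, fun i j hj p hp q hq => ?_⟩
  have hσ : (2 : ℝ)⁻¹ ^ k * 2 ^ k = 1 := by simp
  have hσ0 : 0 < (2 : ℝ)⁻¹ ^ k := by positivity
  have hπσ : π * (2 : ℝ)⁻¹ ^ k < δ := by rwa [lt_div_iff₀ hπ, mul_comm] at hk
  have hj1 : (j : ℝ) + 1 ≤ 2 * 2 ^ k := by exact_mod_cast (by rw [pow_succ] at hj; omega)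
  obtain ⟨θ, hθ, hθp⟩ := exists_sphPoint_eq_of_mem_dyadicCell hp
  obtain ⟨θ', hθ', hθq⟩ := exists_sphPoint_eq_of_mem_dyadicCell hq
  have hbox : ∀ {r : E3} {φ : ℝ}, r ∈ dyadicCell k i j →
      φ ∈ Icc (π / 2 + j * π * (2 : ℝ)⁻¹ ^ k) (π / 2 + (j + 1) * π * (2 : ℝ)⁻¹ ^ k) →
      (r 2, φ) ∈ Icc (-1 : ℝ) 1 ×ˢ Icc (π / 2) (π / 2 + 2 * π) := by
    intro r φ hr hφ
    refine ⟨abs_le.1 (abs_coord_two_le_one hr.1), hφ.1.trans' ?_, hφ.2.trans ?_⟩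
    · have : 0 ≤ j * π * (2 : ℝ)⁻¹ ^ k := by positivity
      linarith
    · linear_combination (π * (2 : ℝ)⁻¹ ^ k) * hj1 + 2 * π * hσ
  rw [← hθp, ← hθq]
  refine hunif (p 2, θ) (hbox hp hθ) (q 2, θ') (hbox hq hθ') ?_
  rw [Prod.dist_eq, Real.dist_eq, Real.dist_eq, max_lt_iff]
  have hσπ : (2 : ℝ)⁻¹ ^ k ≤ π * (2 : ℝ)⁻¹ ^ k :=
    le_mul_of_one_le_left hσ0.le (by linarith [pi_gt_three])
  obtain ⟨hz, hz'⟩ := hp.2.1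
  obtain ⟨hz2, hz2'⟩ := hq.2.1
  constructor
  · rw [abs_lt]; constructor <;> linarith
  · rw [abs_lt]; constructor <;> linarith [hθ.1, hθ.2, hθ'.1, hθ'.2]

lemma exists_int_eq_of_mem_Icc_inter {s u : ℝ} (hs : 0 ≤ s) {a b : ℤ} (hab : a ≠ b)
    (ha : u ∈ Icc (a * s) ((a + 1) * s)) (hb : u ∈ Icc (b * s) ((b + 1) * s)) :
    ∃ n : ℤ, u = n * s := by
  rcases hab.lt_or_gt with h | h
  · have : ((a : ℝ) + 1) * s ≤ b * s := by gcongr; exact_mod_cast h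
    exact ⟨b, le_antisymm (ha.2.trans this) hb.1⟩
  · have : ((b : ℝ) + 1) * s ≤ a * s := by gcongr; exact_mod_cast h
    exact ⟨a, le_antisymm (hb.2.trans this) ha.1⟩

lemma not_eventually_exists_int_eq {s : ℝ} (hs : 0 < s) (c t₀ : ℝ) :
    ¬ ∀ᶠ t in 𝓝 t₀, ∃ n : ℤ, t + c = n * s := by
  intro h
  obtain ⟨n₀, hn₀⟩ := h.self_of_nhds
  obtain ⟨t, ⟨n, hn⟩, ht⟩ :=
    ((h.filter_mono nhdsWithin_le_nhds).and (Ioo_mem_nhdsGT (lt_add_of_pos_right t₀ hs))).exists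
  have h0 : ((0 : ℤ) : ℝ) < n - n₀ := by
    rw [Int.cast_zero, ← mul_lt_mul_iff_left₀ hs]; linarith [ht.1]
  have h1 : (n : ℝ) - n₀ < ((1 : ℤ) : ℝ) := by
    rw [Int.cast_one, ← mul_lt_mul_iff_left₀ hs]; linarith [ht.2]
  rw [← Int.cast_sub] at h0 h1
  have := Int.cast_lt.1 h0
  have := Int.cast_lt.1 h1
  omega

lemma exists_eventually_sphPoint_mem {V : Set E3} (hV : IsOpen V) {x : E3} (hxV : x ∈ V)
    (hx : x ∈ sphere2) : ∃ w : ℝ × ℝ, |w.1| < 1 ∧ ∀ᶠ v in 𝓝 w, sphPoint v.1 v.2 ∈ V := by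
  have hO : IsOpen ((fun v : ℝ × ℝ => sphPoint v.1 v.2) ⁻¹' V) :=
    hV.preimage continuous_sphPoint
  have hcl : (x 2, azimuth x) ∈ closure (Ioo (-1 : ℝ) 1 ×ˢ univ) := by
    rw [closure_prod_eq, closure_Ioo (by norm_num), closure_univ]
    exact ⟨abs_le.1 (abs_coord_two_le_one hx), trivial⟩
  obtain ⟨w, hwV, hw, -⟩ :=
    mem_closure_iff.1 hcl _ hO (by simpa [sphPoint_coord_two_azimuth hx])
  exact ⟨w, abs_lt.2 hw, hO.mem_nhds hwV⟩

lemma coords_of_sphPoint_mem_dyadicCell {k i j : ℕ} (hj : j < 2 ^ (k + 1)) {z θ : ℝ}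
    (hz : |z| < 1) (h : sphPoint z θ ∈ dyadicCell k i j) :
    z + 1 ∈ Icc (i * (2 : ℝ)⁻¹ ^ k) ((i + 1) * (2 : ℝ)⁻¹ ^ k) ∧
      ∃ a : ℤ, a % 2 ^ (k + 1) = j ∧
        θ - π / 2 ∈ Icc (a * (π * (2 : ℝ)⁻¹ ^ k)) ((a + 1) * (π * (2 : ℝ)⁻¹ ^ k)) := by
  obtain ⟨-, ⟨hz1, hz2⟩, haz⟩ := h
  simp only [sphPoint_two] at hz1 hz2
  refine ⟨⟨by linarith, by linarith⟩, ?_⟩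
  obtain ⟨θ', ⟨hθ1, hθ2⟩, hθ'⟩ := azIn_iff.1 haz
  rw [coe_azimuth_sphPoint hz, Angle.angle_eq_iff_two_pi_dvd_sub] at hθ'
  obtain ⟨m, hm⟩ := hθ'
  have hσ : (2 : ℝ)⁻¹ ^ k * 2 ^ k = 1 := by simp
  refine ⟨j - 2 ^ (k + 1) * m, ?_, ?_, ?_⟩
  · rw [Int.sub_mul_emod_self_left]
    exact Int.emod_eq_of_lt (by positivity) (by exact_mod_cast hj)
  · push_cast
    linear_combination hθ1 + hm - 2 * π * m * hσ
  · push_cast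
    linear_combination hθ2 - hm + 2 * π * m * hσ

lemma relInterior_dyadicCell_inter_eq_empty {k i j i' j' : ℕ} (hj : j < 2 ^ (k + 1))
    (hj' : j' < 2 ^ (k + 1)) (hne : (i, j) ≠ (i', j')) :
    relInterior (dyadicCell k i j) ∩ relInterior (dyadicCell k i' j') = ∅ := by
  refine eq_empty_iff_forall_notMem.2 ?_
  rintro x ⟨⟨hx, U, hU, hxU, hUc⟩, -, U', hU', hxU', hUc'⟩
  obtain ⟨w, hw1, hw⟩ := exists_eventually_sphPoint_mem (hU.inter hU') ⟨hxU, hxU'⟩ hx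
  have hstrip : ∀ᶠ v : ℝ × ℝ in 𝓝 w, |v.1| < 1 :=
    (isOpen_lt (continuous_abs.comp continuous_fst) continuous_const).mem_nhds hw1
  have hcoords := (hw.and hstrip).mono fun v ⟨hvU, hv1⟩ =>
    And.intro
      (coords_of_sphPoint_mem_dyadicCell hj hv1 (hUc ⟨hvU.1, sphPoint_mem_sphere2 hv1.le _⟩))
      (coords_of_sphPoint_mem_dyadicCell hj' hv1 (hUc' ⟨hvU.2, sphPoint_mem_sphere2 hv1.le _⟩))
  have hσ : 0 < (2 : ℝ)⁻¹ ^ k := by positivity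
  rcases eq_or_ne i i' with rfl | hii
  · have hjj : j ≠ j' := fun h => hne (by rw [h])
    refine not_eventually_exists_int_eq (mul_pos pi_pos hσ) (-(π / 2)) w.2
      (((Continuous.prodMk_right w.1).tendsto w.2).eventually hcoords |>.mono ?_)
    rintro θ ⟨⟨-, a, ha, hθa⟩, -, b, hb, hθb⟩
    exact exists_int_eq_of_mem_Icc_inter (by positivity)
      (fun hab => hjj (by subst hab; omega)) hθa hθb
  · refine not_eventually_exists_int_eq hσ 1 w.1
      (((Continuous.prodMk_left w.2).tendsto w.1).eventually hcoords |>.mono ?_)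
    rintro z ⟨⟨hzi, -⟩, hzi', -⟩
    exact exists_int_eq_of_mem_Icc_inter hσ.le (a := i) (b := i') (by exact_mod_cast hii)
      (by exact_mod_cast hzi) (by exact_mod_cast hzi')

lemma measurableSet_azIn (a b : ℝ) : MeasurableSet {p | azIn p a b} := by
  have haz : Measurable azimuth := Complex.measurable_arg.comp
    (by fun_prop : Measurable fun p : E3 => (p 0 : ℂ) + (p 1 : ℂ) * Complex.I)
  rw [show {p | azIn p a b} = ⋃ m : ℤ,
      {p | a ≤ azimuth p + 2 * π * m} ∩ {p | azimuth p + 2 * π * m ≤ b} by ext; simp [azIn]]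
  exact .iUnion fun m => (measurableSet_le measurable_const (haz.add_const _)).inter
    (measurableSet_le (haz.add_const _) measurable_const)

lemma measurableSet_dyadicCell (k i j : ℕ) : MeasurableSet (dyadicCell k i j) := by
  have hz : Measurable fun p : E3 => p 2 := by fun_prop
  exact isClosed_sphere.measurableSet.inter
    (((measurableSet_le measurable_const hz).inter (measurableSet_le hz measurable_const)).inter
      (measurableSet_azIn _ _))

lemma memB.measurableSet {S : Set E3} (hS : memB S) : MeasurableSet S := by
  obtain ⟨-, n, lev, c, hc, -, rfl⟩ := hS
  choose i j _ _ hij using hc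
  simp only [hij]
  exact .iUnion fun _ => measurableSet_dyadicCell _ _ _

lemma memB.subset_sphere2 {S : Set E3} (hS : memB S) : S ⊆ sphere2 := by
  obtain ⟨-, n, lev, c, hc, -, rfl⟩ := hS
  choose i j _ _ hij using hc
  simp only [hij]
  exact iUnion_subset fun _ _ hp => hp.1

-- Unlike `sphPoint`, this parametrization is smooth, hence Lipschitz on compact sets, which
-- bounds the Hausdorff measure of `𝕊²`.
def latLong (v : Fin 2 → ℝ) : E3 := !₂[cos (v 0) * cos (v 1), cos (v 0) * sin (v 1), sin (v 0)]

lemma contDiff_latLong : ContDiff ℝ 1 latLong :=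
  (contDiff_piLp 2).2 fun i => by fin_cases i <;> simp [latLong] <;> fun_prop

lemma latLong_arcsin {z : ℝ} (hz : |z| ≤ 1) (θ : ℝ) :
    latLong ![arcsin z, θ] = sphPoint z θ := by
  obtain ⟨h1, h2⟩ := abs_le.1 hz
  ext i; fin_cases i <;> simp [latLong, sphPoint, cos_arcsin, sin_arcsin h1 h2]

lemma sphere2_subset_image_latLong : sphere2 ⊆ latLong '' closedBall 0 π := by
  intro p hp
  refine ⟨![arcsin (p 2), azimuth p], ?_, ?_⟩
  · rw [mem_closedBall_zero_iff, pi_norm_le_iff_of_nonneg pi_pos.le]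
    intro i; fin_cases i
    · have := neg_pi_div_two_le_arcsin (p 2)
      have := arcsin_le_pi_div_two (p 2)
      simp only [Fin.zero_eta, Matrix.cons_val_zero, norm_eq_abs, abs_le]
      constructor <;> linarith [pi_pos]
    · simp only [Fin.mk_one, Matrix.cons_val_one, Matrix.cons_val_fin_one, norm_eq_abs]
      exact abs_le.2 ⟨(Complex.neg_pi_lt_arg _).le, Complex.arg_le_pi _⟩
  · rw [latLong_arcsin (abs_coord_two_le_one hp), sphPoint_coord_two_azimuth hp]

lemma muS_sphere2_lt_top : muS sphere2 < ⊤ := by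
  obtain ⟨K, hK⟩ := (contDiff_latLong.locallyLipschitz.locallyLipschitzOn
    (s := closedBall 0 π)).exists_lipschitzOnWith_of_compact (isCompact_closedBall _ _)
  have hvol : (μH[2] (closedBall (0 : Fin 2 → ℝ) π)) < ⊤ := by
    have := hausdorffMeasure_pi_real (ι := Fin 2)
    simp only [Fintype.card_fin, Nat.cast_ofNat] at this
    rw [this]; exact measure_closedBall_lt_top
  refine ENNReal.mul_lt_top (by simp [pi_pos]) ?_
  calc sigmaM sphere2 ≤ μH[2] (latLong '' closedBall 0 π) :=
        measure_mono sphere2_subset_image_latLong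
    _ ≤ (K : ℝ≥0∞) ^ (2 : ℝ) * μH[2] (closedBall 0 π) :=
        hK.hausdorffMeasure_image_le (by norm_num)
    _ < ⊤ := ENNReal.mul_lt_top (by simp) hvol

-- `dyadicCell 1 3 0` is the part of `𝕊²` with `p 2 ≥ 1/2` and longitude in `[π/2, π]`.
lemma coords_of_mem_dyadicCell_one_three_zero {p : E3} (hp : p ∈ dyadicCell 1 3 0) :
    1 / 2 ≤ p 2 ∧ p 0 ≤ 0 ∧ 0 ≤ p 1 := by
  obtain ⟨θ, ⟨hθ1, hθ2⟩, hθp⟩ := exists_sphPoint_eq_of_mem_dyadicCell hp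
  norm_num at hθ1 hθ2
  refine ⟨by linarith [hp.2.1.1], ?_, ?_⟩ <;> rw [← hθp]
  · exact mul_nonpos_of_nonneg_of_nonpos (sqrt_nonneg _)
      (cos_nonpos_of_pi_div_two_le_of_le hθ1 (by linarith [pi_pos]))
  · exact mul_nonneg (sqrt_nonneg _)
      (sin_nonneg_of_nonneg_of_le_pi (by linarith [pi_pos]) (by linarith))

lemma mem_dyadicCell_one_three_zero {p : E3} (hp : p ∈ sphere2) (h2 : 1 / 2 ≤ p 2)
    (h0 : p 0 < 0) (h1 : 0 < p 1) : p ∈ dyadicCell 1 3 0 := by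
  have hlt : π / 2 < |azimuth p| :=
    lt_of_not_ge fun h => h0.not_ge (by simpa using Complex.abs_arg_le_pi_div_two_iff.1 h)
  have hnn : 0 ≤ azimuth p := Complex.arg_nonneg_iff.2 (by simpa using h1.le)
  have hle : azimuth p ≤ π := Complex.arg_le_pi _
  have hz := (abs_le.1 (abs_coord_two_le_one hp)).2
  refine ⟨hp, ⟨by norm_num; linarith, by norm_num; linarith⟩, 0, ?_, ?_⟩
  · rw [abs_of_nonneg hnn] at hlt; norm_num; linarith
  · norm_num; linarith

lemma opf_dyadicCell_one_three_zero : OPF (dyadicCell 1 3 0) := by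
  intro p hp q hq _
  obtain ⟨hp2, hp0, hp1⟩ := coords_of_mem_dyadicCell_one_three_zero hp
  obtain ⟨hq2, hq0, hq1⟩ := coords_of_mem_dyadicCell_one_three_zero hq
  rw [rinner_eq]
  nlinarith [mul_nonneg_of_nonpos_of_nonpos hp0 hq0, mul_nonneg hp1 hq1]

lemma lipschitzWith_one_proj : LipschitzWith 1 fun p : E3 => ![p 0, p 1] :=
  LipschitzWith.of_dist_le_mul fun p q => by
    rw [NNReal.coe_one, one_mul, dist_pi_le_iff dist_nonneg, Fin.forall_fin_two]
    exact ⟨PiLp.dist_apply_le p q 0, PiLp.dist_apply_le p q 1⟩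

lemma muS_dyadicCell_one_three_zero_pos : 0 < muS (dyadicCell 1 3 0) := by
  set W : Set (Fin 2 → ℝ) := {v | v 0 < 0} ∩ {v | 0 < v 1} ∩ {v | v 0 ^ 2 + v 1 ^ 2 < 3 / 4}
  have hW : IsOpen W := by
    refine ((isOpen_lt ?_ ?_).inter (isOpen_lt ?_ ?_)).inter (isOpen_lt ?_ ?_) <;> fun_prop
  have hWne : W.Nonempty := ⟨![-1 / 2, 1 / 2], by norm_num [W]⟩
  have hWsub : W ⊆ (fun p : E3 => ![p 0, p 1]) '' dyadicCell 1 3 0 := by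
    simp only [W, subset_def, mem_inter_iff, mem_ofPred_eq]
    rintro v ⟨⟨hv0, hv1⟩, hv⟩
    have hsq : √(1 - v 0 ^ 2 - v 1 ^ 2) ^ 2 = 1 - v 0 ^ 2 - v 1 ^ 2 := sq_sqrt (by linarith)
    refine ⟨!₂[v 0, v 1, √(1 - v 0 ^ 2 - v 1 ^ 2)],
      mem_dyadicCell_one_three_zero ?_ ?_ hv0 hv1, ?_⟩
    · rw [mem_sphere2_iff]; simp [hsq]
    · simp only [Matrix.cons_val]
      exact le_sqrt_of_sq_le (by linarith)
    · ext i; fin_cases i <;> rfl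
  have hvol : volume W ≤ μH[2] ((fun p : E3 => ![p 0, p 1]) '' dyadicCell 1 3 0) := by
    have := hausdorffMeasure_pi_real (ι := Fin 2)
    simp only [Fintype.card_fin, Nat.cast_ofNat] at this
    rw [this]; exact measure_mono hWsub
  have hσ : 0 < sigmaM (dyadicCell 1 3 0) := by
    calc 0 < volume W := hW.measure_pos volume hWne
      _ ≤ _ := hvol
      _ ≤ (1 : ℝ≥0∞) ^ (2 : ℝ) * sigmaM (dyadicCell 1 3 0) :=
        lipschitzWith_one_proj.hausdorffMeasure_image_le (by norm_num) _
      _ = sigmaM (dyadicCell 1 3 0) := by rw [ENNReal.one_rpow, one_mul]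
  exact ENNReal.mul_pos (ENNReal.inv_ne_zero.2 ENNReal.ofReal_ne_top) hσ.ne'

lemma memB_dyadicCell_one_three_zero : memB (dyadicCell 1 3 0) :=
  ⟨opf_dyadicCell_one_three_zero, 1, fun _ => 1, fun _ => dyadicCell 1 3 0,
    fun _ => ⟨3, 0, by norm_num, by norm_num, rfl⟩,
    fun a b hab => (hab (Subsingleton.elim a b)).elim, (iUnion_const _).symm⟩

lemma memB_biUnion {k : ℕ} {A : Finset (ℕ × ℕ)}
    (hA : ∀ ij ∈ A, ij.1 < 2 ^ (k + 1) ∧ ij.2 < 2 ^ (k + 1))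
    (hopf : OPF (⋃ ij ∈ A, dyadicCell k ij.1 ij.2)) :
    memB (⋃ ij ∈ A, dyadicCell k ij.1 ij.2) := by
  set e := A.equivFin.symm
  refine ⟨hopf, A.card, fun _ => k, fun a => dyadicCell k (e a).1.1 (e a).1.2,
    fun a => ⟨_, _, (hA _ (e a).2).1, (hA _ (e a).2).2, rfl⟩, fun a b hab => ?_, ?_⟩
  · exact relInterior_dyadicCell_inter_eq_empty (hA _ (e a).2).2 (hA _ (e b).2).2
      fun h => hab (e.injective (Subtype.ext h))
  · rw [e.surjective.iUnion_comp (fun ij : A => dyadicCell k ij.1.1 ij.1.2)]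
    ext; simp

lemma exists_pos_le_abs_rinner {K : Set E3} (hK : IsCompact K) (hKs : K ⊆ sphere2)
    (hopf : OPF K) : ∃ δ > 0, ∀ p ∈ K, ∀ q ∈ K, δ ≤ |rinner p q| := by
  rcases K.eq_empty_or_nonempty with rfl | hne
  · exact ⟨1, one_pos, by simp⟩
  have hc : Continuous fun v : E3 × E3 => |rinner v.1 v.2| :=
    (continuous_fst.inner continuous_snd).abs
  obtain ⟨w, ⟨hw1, hw2⟩, hmin⟩ := (hK.prod hK).exists_isMinOn (hne.prod hne) hc.continuousOn
  refine ⟨_, abs_pos.2 fun h0 => ?_, fun p hp q hq => isMinOn_iff.1 hmin (p, q) ⟨hp, hq⟩⟩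
  by_cases hw : w.1 = w.2
  · rw [hw, rinner_self_of_mem_sphere2 (hKs hw2)] at h0
    exact one_ne_zero h0
  · exact hopf _ hw1 _ hw2 hw h0

lemma exists_memB_superset {K : Set E3} (hK : IsCompact K) (hKs : K ⊆ sphere2)
    (hopf : OPF K) : ∃ S', memB S' ∧ K ⊆ S' := by
  classical
  obtain ⟨δ, hδ, hKδ⟩ := exists_pos_le_abs_rinner hK hKs hopf
  obtain ⟨k, hk⟩ := exists_level_dist_lt (half_pos hδ)
  set A := (Finset.range (2 ^ (k + 1)) ×ˢ Finset.range (2 ^ (k + 1))).filter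
    fun ij => (dyadicCell k ij.1 ij.2 ∩ K).Nonempty
  have hA : ∀ ij ∈ A, ij.1 < 2 ^ (k + 1) ∧ ij.2 < 2 ^ (k + 1) := fun ij hij => by
    simpa using (Finset.mem_filter.1 hij).1
  refine ⟨_, memB_biUnion hA ?_, fun x hx => ?_⟩
  · simp only [OPF, mem_iUnion₂]
    rintro p ⟨ij, hij, hp⟩ q ⟨ij', hij', hq⟩ - h0
    obtain ⟨p₀, hp₀, hp₀K⟩ := (Finset.mem_filter.1 hij).2
    obtain ⟨q₀, hq₀, hq₀K⟩ := (Finset.mem_filter.1 hij').2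
    have := abs_rinner_sub_rinner_le (p := p) (q₀ := q₀) hq.1 (hKs hp₀K)
    rw [h0, zero_sub, abs_neg] at this
    linarith [hKδ p₀ hp₀K q₀ hq₀K, hk _ _ (hA ij hij).2 p hp p₀ hp₀,
      hk _ _ (hA ij' hij').2 q hq q₀ hq₀]
  · obtain ⟨i, j, hi, hj, hxc⟩ := exists_mem_dyadicCell k (hKs hx)
    exact mem_iUnion₂.2 ⟨(i, j), by simpa [A, hi, hj] using ⟨x, hxc, hx⟩, hxc⟩

lemma exists_memB_measure_gt {S : Set E3} (hS : S ⊆ sphere2) (hSm : MeasurableSet S)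
    (hopf : OPF S) {ε : ℝ} (hε : 0 < ε) :
    ∃ S', memB S' ∧ muS S - ENNReal.ofReal ε < muS S' := by
  rcases eq_or_ne (muS S) 0 with h0 | h0
  -- the truncated difference is `0`, so `S'` must have positive measure
  · refine ⟨_, memB_dyadicCell_one_three_zero, ?_⟩
    rw [h0, zero_tsub]
    exact muS_dyadicCell_one_three_zero_pos
  set ν := muS.restrict sphere2
  have : IsFiniteMeasure ν := ⟨by rw [Measure.restrict_apply_univ]; exact muS_sphere2_lt_top⟩
  have hν : ∀ A ⊆ sphere2, ν A = muS A := fun A hA => Measure.restrict_eq_self _ hA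
  obtain ⟨K, hKS, hKc, hK⟩ := hSm.exists_lt_isClosed_of_ne_top (μ := ν) (measure_ne_top ν S)
    (r := muS S - ENNReal.ofReal ε) (by
      rw [hν S hS]
      exact ENNReal.sub_lt_self (hν S hS ▸ measure_ne_top ν S) h0 (by simpa using hε))
  have hKs := hKS.trans hS
  obtain ⟨S', hS', hKS'⟩ := exists_memB_superset
    ((isCompact_sphere 0 1).of_isClosed_subset hKc hKs) hKs
    fun p hp q hq => hopf p (hKS hp) q (hKS hq)
  exact ⟨S', hS', hK.trans_le ((hν K hKs).trans_le (measure_mono hKS'))⟩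

/-- every measurable orthogonal-pair-free set can be approximated
(in measure, up to ε) by a set of ℬ; consequently the two suprema agree. -/
theorem stmt5 :
    (∀ S : Set E3, S ⊆ sphere2 → MeasurableSet S → OPF S →
      ∀ ε : ℝ, 0 < ε →
        ∃ S' : Set E3, memB S' ∧ muS S' > muS S - ENNReal.ofReal ε) ∧
    sSup {m : ℝ≥0∞ | ∃ S' : Set E3, memB S' ∧ muS S' = m}
      = sSup {m : ℝ≥0∞ | ∃ S : Set E3, S ⊆ sphere2 ∧ MeasurableSet S ∧ OPF S ∧ muS S = m} := by
  refine ⟨fun S hS hSm hopf ε hε => exists_memB_measure_gt hS hSm hopf hε, le_antisymm ?_ ?_⟩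
  · exact sSup_le_sSup fun m ⟨S', hS', hm⟩ =>
      ⟨S', hS'.subset_sphere2, hS'.measurableSet, hS'.1, hm⟩
  · refine sSup_le fun m ⟨S, hS, hSm, hopf, hm⟩ =>
      hm ▸ ENNReal.le_of_forall_pos_le_add fun ε hε _ => ?_
    obtain ⟨S', hS', hlt⟩ := exists_memB_measure_gt hS hSm hopf (ε := ε) (by exact_mod_cast hε)
    rw [← ENNReal.ofReal_coe_nnreal, ← tsub_le_iff_right]
    exact hlt.le.trans (le_sSup ⟨S', hS', rfl⟩)
end
end

section
/- Let M ⊆ 𝕊² be an orthogonal-pair-free set, and define G(M) = ⋃_{y∈M} G(y), M₁ = {z ∈ 𝕊² : G(z) ⊆ G(M)}, M₂ = M₁ \ G(M). Let x, y, z be three distinct points of 𝕊² such that arc(x,y) ⊆ M₂ and arc(y,z) ⊆ M₂. Then x ≠ −z and arc(x,z) ⊆ M₁. -/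
open Metric Set MeasureTheory Filter
open scoped ENNReal Topology

noncomputable section

/-
Every point `u ∈ 𝕊²` with `0 ∈ [⟨u,x⟩, ⟨u,z⟩]` lies in `G(M)`: the sign of `⟨u,·⟩` changes along
`x → y → z`, so `⟨u,·⟩` vanishes at some `q ∈ arc(x,y) ∪ arc(y,z) ⊆ M₁`, i.e. `u ∈ G(q) ⊆ G(M)`.
If `x = -z`, then `u = x` qualifies, contradicting `x ∈ M₂`. Otherwise every point of `arc(x,z)`
is `v/‖v‖` with `v ≠ 0` on the segment `[x,z]`, and every `u ∈ G(v/‖v‖)` qualifies because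
`⟨u,v⟩ = 0` is a convex combination of `⟨u,x⟩` and `⟨u,z⟩`.
-/

open scoped RealInnerProductSpace

lemma image_inner_segment {E : Type*} [NormedAddCommGroup E] [InnerProductSpace ℝ E]
    (u a b : E) : (fun p => ⟪u, p⟫) '' segment ℝ a b = uIcc ⟪u, a⟫ ⟪u, b⟫ := by
  rw [← segment_eq_uIcc]
  exact image_segment ℝ (innerₛₗ ℝ u).toAffineMap a b

lemma eq_neg_of_zero_mem_segment {E : Type*} [NormedAddCommGroup E] [NormedSpace ℝ E]
    {x z : E} (h : (0 : E) ∈ segment ℝ x z) (hn : ‖x‖ = ‖z‖) : x = -z := by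
  rw [mem_segment_iff_sameRay, zero_sub, sub_zero] at h
  exact neg_eq_iff_eq_neg.mp (h.eq_of_norm_eq (by rwa [norm_neg]))

lemma rinner_comm (p q : E3) : rinner p q = rinner q p := real_inner_comm q p

lemma rinner_smul_left_eq_zero_iff {c : ℝ} (hc : c ≠ 0) (p q : E3) :
    rinner (c • p) q = 0 ↔ rinner p q = 0 := by
  simp [rinner, real_inner_smul_left, hc]

lemma norm_eq_one_of_mem_sphere2 {p : E3} (hp : p ∈ sphere2) : ‖p‖ = 1 :=
  mem_sphere_zero_iff_norm.mp hp

lemma mem_arc_left {x : E3} (hx : ‖x‖ = 1) (y : E3) : x ∈ arc x y :=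
  ⟨x, left_mem_segment ℝ x y, by simp [hx]⟩

lemma zero_mem_uIcc_rinner_iff {u a b : E3} :
    0 ∈ uIcc (rinner u a) (rinner u b) ↔ ∃ p ∈ segment ℝ a b, rinner u p = 0 := by
  unfold rinner
  rw [← image_inner_segment]
  rfl

lemma exists_mem_arc_rinner_eq_zero {u a b : E3} (h : 0 ∈ uIcc (rinner u a) (rinner u b)) :
    ∃ q ∈ arc a b, rinner u q = 0 := by
  obtain ⟨p, hp, hp0⟩ := zero_mem_uIcc_rinner_iff.mp h
  refine ⟨‖p‖⁻¹ • p, ⟨p, hp, rfl⟩, ?_⟩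
  unfold rinner at hp0 ⊢
  rw [real_inner_smul_right, hp0, mul_zero]

lemma Mtwo_subset_Mone (M : Set E3) : Mtwo M ⊆ Mone M := sdiff_subset

lemma mem_GM_of_arc_subset_Mone {M : Set E3} {a b u : E3} (hab : arc a b ⊆ Mone M)
    (hu : u ∈ sphere2) (h : 0 ∈ uIcc (rinner u a) (rinner u b)) : u ∈ GM M := by
  obtain ⟨q, hq, hq0⟩ := exists_mem_arc_rinner_eq_zero h
  exact (hab hq).2 ⟨hu, (rinner_comm q u).trans hq0⟩

lemma mem_GM_of_zero_mem_uIcc {M : Set E3} {x y z u : E3} (hxy : arc x y ⊆ Mone M)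
    (hyz : arc y z ⊆ Mone M) (hu : u ∈ sphere2) (h : 0 ∈ uIcc (rinner u x) (rinner u z)) :
    u ∈ GM M :=
  (uIcc_subset_uIcc_union_uIcc h).elim (mem_GM_of_arc_subset_Mone hxy hu)
    (mem_GM_of_arc_subset_Mone hyz hu)

lemma ne_neg_of_arc_subset_Mtwo {M : Set E3} {x y z : E3} (hx : x ∈ sphere2)
    (hxy : arc x y ⊆ Mtwo M) (hyz : arc y z ⊆ Mtwo M) : x ≠ -z := by
  intro hxz
  have hnx := norm_eq_one_of_mem_sphere2 hx
  have hsign : 0 ∈ uIcc (rinner x x) (rinner x z) := by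
    simp [← neg_eq_iff_eq_neg.mpr hxz, rinner, hnx]
  exact (hxy (mem_arc_left hnx y)).2 <| mem_GM_of_zero_mem_uIcc
    (hxy.trans (Mtwo_subset_Mone M)) (hyz.trans (Mtwo_subset_Mone M)) hx hsign

lemma arc_subset_Mone {M : Set E3} {x y z : E3} (hx : ‖x‖ = 1) (hz : ‖z‖ = 1) (hxz : x ≠ -z)
    (hxy : arc x y ⊆ Mone M) (hyz : arc y z ⊆ Mone M) : arc x z ⊆ Mone M := by
  rintro _ ⟨v, hv, rfl⟩
  have hv0 : v ≠ 0 := by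
    rintro rfl
    exact hxz (eq_neg_of_zero_mem_segment hv (hx.trans hz.symm))
  refine ⟨mem_sphere_zero_iff_norm.mpr (norm_smul_inv_norm hv0), ?_⟩
  rintro u ⟨hu, huv⟩
  rw [rinner_smul_left_eq_zero_iff (inv_ne_zero (norm_ne_zero_iff.mpr hv0)), rinner_comm] at huv
  exact mem_GM_of_zero_mem_uIcc hxy hyz hu (zero_mem_uIcc_rinner_iff.mpr ⟨v, hv, huv⟩)

theorem stmt9_general (M : Set E3)
    (x y z : E3) (hx : x ∈ sphere2) (hz : z ∈ sphere2)
    (h1 : arc x y ⊆ Mtwo M) (h2 : arc y z ⊆ Mtwo M) :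
    x ≠ -z ∧ arc x z ⊆ Mone M := by
  have hxz := ne_neg_of_arc_subset_Mtwo hx h1 h2
  exact ⟨hxz, arc_subset_Mone (norm_eq_one_of_mem_sphere2 hx) (norm_eq_one_of_mem_sphere2 hz)
    hxz (h1.trans (Mtwo_subset_Mone M)) (h2.trans (Mtwo_subset_Mone M))⟩

/-- if arc(x,y) ⊆ M₂ and arc(y,z) ⊆ M₂ then x ≠ -z and arc(x,z) ⊆ M₁. -/
theorem stmt9 (M : Set E3) (hM : M ⊆ sphere2) (hOPF : OPF M)
    (x y z : E3) (hx : x ∈ sphere2) (hy : y ∈ sphere2) (hz : z ∈ sphere2)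
    (hxy : x ≠ y) (hyz : y ≠ z) (hxz : x ≠ z)
    (h1 : arc x y ⊆ Mtwo M) (h2 : arc y z ⊆ Mtwo M) :
    x ≠ -z ∧ arc x z ⊆ Mone M :=
  stmt9_general M x y z hx hz h1 h2
end
end

section
/- Let (C_n) be a sequence of nonempty closed spherically convex subsets of 𝕊², each contained in some open hemisphere, and let C* be a nonempty closed subset of 𝕊² such that δ_H(C_n, C*) → 0 as n → ∞. Let y ∈ 𝕊² and 0 < ε < π/2 be such that the open geodesic ball B(y,ε) is contained in C*. Then there exists N such that for all n > N, B(y, ε/2) ⊆ C_n. -/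
open Metric Set MeasureTheory Filter
open scoped ENNReal Topology

noncomputable section

/-!
Suppose `q ∈ B(y, ε/2)` is missing from `C n`. Since `C n` is closed, spherically convex and
contains no antipodal pair, the cone over it is a closed convex cone avoiding `q`, so a unit
vector `z` has `⟪q, z⟫ > 0` and `⟪x, z⟫ ≤ 0` on `C n`. Turning `q` by `ε/4` towards `z` gives a
point `p ∈ B(y, ε) ⊆ C*` at angle at most `π/2 - ε/4` from `z`. Once `δ_H(C n, C*) < ε/4`,
some `x ∈ C n` lies within angle `ε/4` of `p`, hence within angle `< π/2` of `z`: a contradiction.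
-/

open Real InnerProductGeometry NormedSpace
open scoped RealInnerProductSpace

namespace InnerProductGeometry

variable {V : Type*} [NormedAddCommGroup V] [InnerProductSpace ℝ V]

lemma angle_eq_arccos_inner {x y : V} (hx : ‖x‖ = 1) (hy : ‖y‖ = 1) :
    angle x y = arccos ⟪x, y⟫ := by
  simp [angle, hx, hy]

lemma inner_pos_of_angle_lt_pi_div_two {x y : V} (h : angle x y < π / 2) : 0 < ⟪x, y⟫ := by
  rw [angle, arccos_lt_pi_div_two] at h
  by_contra! hle
  exact h.not_ge (div_nonpos_of_nonpos_of_nonneg hle (by positivity))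

lemma exists_angle_le_and_angle_le_pi_div_two_sub {q z : V} (hq : ‖q‖ = 1) (hz : ‖z‖ = 1)
    (hqz : 0 ≤ ⟪q, z⟫) {ρ : ℝ} (hρ0 : 0 ≤ ρ) (hρ : ρ ≤ π / 4) :
    ∃ p : V, ‖p‖ = 1 ∧ angle q p ≤ ρ ∧ angle p z ≤ π / 2 - ρ := by
  set s := ⟪q, z⟫
  set v := z - s • q with hv
  have hqq : ⟪q, q⟫ = 1 := by rw [real_inner_self_eq_norm_sq, hq, one_pow]
  have hqv : ⟪q, v⟫ = 0 := by rw [hv, inner_sub_right, real_inner_smul_right, hqq, mul_one, sub_self]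
  have hzv : z = v + s • q := by rw [hv, sub_add_cancel]
  have hpyth : ‖v‖ ^ 2 + s ^ 2 = 1 := by
    have := norm_add_sq_eq_norm_sq_add_norm_sq_of_inner_eq_zero v (s • q)
      (by rw [real_inner_smul_right, real_inner_comm, hqv, mul_zero])
    rw [← hzv, hz, norm_smul, hq, Real.norm_eq_abs] at this
    nlinarith [abs_mul_abs_self s]
  rcases eq_or_ne v 0 with hv0 | hv0
  · have hzq : z = q := by
      have hs1 : s = 1 := by nlinarith [hpyth, norm_eq_zero.mpr hv0]
      rw [hzv, hv0, hs1, zero_add, one_smul]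
    refine ⟨q, hq, ?_, ?_⟩ <;> rw [← hzq, angle_self (by rw [← norm_ne_zero_iff, hz]; norm_num)]
    · exact hρ0
    · linarith [pi_pos]
  set u := normalize v with hu
  have hu1 : ‖u‖ = 1 := norm_normalize_eq_one_iff.mpr hv0
  have hqu : ⟪q, u⟫ = 0 := by rw [hu, NormedSpace.normalize, real_inner_smul_right, hqv, mul_zero]
  have huz : ⟪u, z⟫ = ‖v‖ := by
    rw [hzv, inner_add_right, real_inner_smul_right, real_inner_comm q, hqu, mul_zero, add_zero,
      real_inner_comm, hu, NormedSpace.normalize, real_inner_smul_right, real_inner_self_eq_norm_sq]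
    field_simp [norm_ne_zero_iff.mpr hv0]
  set p := cos ρ • q + sin ρ • u with hp
  have hqp : ⟪q, p⟫ = cos ρ := by
    rw [hp, inner_add_right, real_inner_smul_right, real_inner_smul_right, hqq, hqu]; ring
  have hp1 : ‖p‖ = 1 := by
    have := norm_add_sq_eq_norm_sq_add_norm_sq_of_inner_eq_zero (cos ρ • q) (sin ρ • u)
      (by rw [real_inner_smul_left, real_inner_smul_right, hqu]; ring)
    rw [norm_smul, norm_smul, hq, hu1, Real.norm_eq_abs, Real.norm_eq_abs, mul_one, mul_one,
      abs_mul_abs_self, abs_mul_abs_self, ← hp] at this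
    nlinarith [cos_sq_add_sin_sq ρ, norm_nonneg p]
  have hsin_le_cos : sin ρ ≤ cos ρ := by
    rw [← sin_pi_div_two_sub]
    exact sin_le_sin_of_le_of_le_pi_div_two (by linarith [pi_pos]) (by linarith) (by linarith)
  have hpz : sin ρ ≤ ⟪p, z⟫ := by
    have hpz_eq : ⟪p, z⟫ = cos ρ * s + sin ρ * ‖v‖ := by
      rw [hp, inner_add_left, real_inner_smul_left, real_inner_smul_left, huz]
    -- `s` and `‖v‖` lie in `[0, 1]` and their squares sum to `1`
    have hsum : 1 ≤ s + ‖v‖ := by nlinarith [norm_nonneg v]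
    have hsin0 : 0 ≤ sin ρ := sin_nonneg_of_nonneg_of_le_pi hρ0 (by linarith [pi_pos])
    nlinarith [mul_le_mul_of_nonneg_right hsin_le_cos hqz, mul_le_mul_of_nonneg_left hsum hsin0]
  refine ⟨p, hp1, ?_, ?_⟩
  · rw [angle_eq_arccos_inner hq hp1, hqp, arccos_cos hρ0 (by linarith [pi_pos])]
  · rw [angle_eq_arccos_inner hp1 hz, arccos_eq_pi_div_two_sub_arcsin]
    have := arcsin_le_arcsin hpz
    rw [arcsin_sin (by linarith [pi_pos]) (by linarith [pi_pos])] at this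
    linarith

end InnerProductGeometry

/-- For `S` on the unit sphere, the cone `{t • x | 0 ≤ t, x ∈ S} ∪ {0}`. -/
def coneOver {V : Type*} [NormedAddCommGroup V] [NormedSpace ℝ V] (S : Set V) : Set V :=
  {w | w = 0 ∨ normalize w ∈ S}

section coneOver

variable {V : Type*} [NormedAddCommGroup V] [NormedSpace ℝ V] {S : Set V}

lemma smul_mem_coneOver {c : ℝ} (hc : 0 ≤ c) {w : V} (hw : w ∈ coneOver S) :
    c • w ∈ coneOver S := by
  rcases hc.eq_or_lt with rfl | hc
  · exact Or.inl (zero_smul ℝ w)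
  rcases hw with rfl | hw
  · exact Or.inl (smul_zero c)
  · exact Or.inr (by rwa [normalize_smul_of_pos hc])

lemma isClosed_coneOver (hS : IsClosed S) : IsClosed (coneOver S) := by
  refine isClosed_of_closure_subset fun w hw => ?_
  rcases eq_or_ne w 0 with rfl | hw0
  · exact Or.inl rfl
  have hcont : ContinuousAt NormedSpace.normalize w :=
    (continuous_norm.continuousAt.inv₀ (norm_ne_zero_iff.mpr hw0)).smul continuousAt_id
  have himage : NormedSpace.normalize '' coneOver S ⊆ insert 0 S := by
    rintro _ ⟨w', rfl | hw', rfl⟩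
    · exact Or.inl normalize_zero_eq_zero
    · exact Or.inr hw'
  have := closure_mono himage (mem_closure_image hcont hw)
  rw [insert_eq, (isClosed_singleton.union hS).closure_eq, ← insert_eq] at this
  exact Or.inr (this.resolve_left ((normalize_eq_zero_iff w).not.mpr hw0))

end coneOver

lemma normalize_mem_arc (x y : E3) {a b : ℝ} (ha : 0 ≤ a) (hb : 0 ≤ b) (hab : 0 < a + b) :
    normalize (a • x + b • y) ∈ arc x y := by
  refine ⟨(a / (a + b)) • x + (b / (a + b)) • y,
    ⟨_, _, div_nonneg ha hab.le, div_nonneg hb hab.le, by field_simp, rfl⟩, ?_⟩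
  have : a • x + b • y = (a + b) • ((a / (a + b)) • x + (b / (a + b)) • y) := by
    rw [smul_add, smul_smul, smul_smul, mul_div_cancel₀ _ hab.ne', mul_div_cancel₀ _ hab.ne']
  rw [this, normalize_smul_of_pos hab]
  rfl

lemma SphConvex.add_mem_coneOver {S : Set E3} (hconv : SphConvex S) (hanti : ∀ x ∈ S, -x ∉ S)
    {w₁ w₂ : E3} (hw₁ : w₁ ∈ coneOver S) (hw₂ : w₂ ∈ coneOver S) : w₁ + w₂ ∈ coneOver S := by
  rcases hw₁ with rfl | hw₁
  · rwa [zero_add]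
  rcases hw₂ with rfl | hw₂
  · rw [add_zero]; exact Or.inr hw₁
  by_cases hsum : w₁ + w₂ = 0
  · exact Or.inl hsum
  have hne : normalize w₁ ≠ -normalize w₂ := fun h => hanti _ hw₂ (h ▸ hw₁)
  refine Or.inr (hconv _ hw₁ _ hw₂ hne ?_)
  have hpos : 0 < ‖w₁‖ + ‖w₂‖ := by
    rcases eq_or_ne w₁ 0 with rfl | h
    · simpa using (norm_pos_iff.mpr (by simpa using hsum))
    · exact add_pos_of_pos_of_nonneg (norm_pos_iff.mpr h) (norm_nonneg _)
  simpa only [norm_smul_normalize] using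
    normalize_mem_arc (normalize w₁) (normalize w₂) (norm_nonneg w₁) (norm_nonneg w₂) hpos

lemma SphConvex.exists_inner_pos_of_notMem {S : Set E3} (hconv : SphConvex S) (hS : IsClosed S)
    (hsub : S ⊆ sphere2) (hanti : ∀ x ∈ S, -x ∉ S) {q : E3} (hq : ‖q‖ = 1) (hqS : q ∉ S) :
    ∃ z : E3, ‖z‖ = 1 ∧ 0 < ⟪q, z⟫ ∧ ∀ x ∈ S, ⟪x, z⟫ ≤ 0 := by
  have hnorm : ∀ x ∈ S, normalize x = x := fun x hx =>
    normalize_eq_self_of_norm_eq_one (by simpa [sphere2] using hsub hx)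
  let K : ProperCone ℝ E3 :=
    { carrier := coneOver S
      add_mem' := hconv.add_mem_coneOver hanti
      zero_mem' := Or.inl rfl
      smul_mem' := fun c _ hw => smul_mem_coneOver c.2 hw
      isClosed' := isClosed_coneOver hS }
  have hqK : q ∉ K := by
    rintro (hq0 | hqS')
    · simp [hq0] at hq
    · exact hqS (by rwa [normalize_eq_self_of_norm_eq_one hq] at hqS')
  obtain ⟨y, hyK, hqy⟩ := K.hyperplane_separation' hqK
  have hy0 : y ≠ 0 := by rintro rfl; simp at hqy
  refine ⟨-normalize y, by rw [norm_neg, norm_normalize_eq_one_iff.mpr hy0], ?_, fun x hx => ?_⟩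
  · rw [inner_neg_right, NormedSpace.normalize, real_inner_smul_right, neg_pos]
    exact mul_neg_of_pos_of_neg (by positivity) hqy
  · rw [inner_neg_right, NormedSpace.normalize, real_inner_smul_right, neg_nonpos]
    exact mul_nonneg (by positivity) (hyK x (Or.inr ((hnorm x hx).symm ▸ hx)))

lemma gdist_eq_angle {p q : E3} (hp : ‖p‖ = 1) (hq : ‖q‖ = 1) : gdist p q = angle p q :=
  (angle_eq_arccos_inner hp hq).symm

lemma gdistToSet_le_pi (y : E3) (B : Set E3) : gdistToSet y B ≤ π := by
  rcases B.eq_empty_or_nonempty with rfl | ⟨b, hb⟩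
  · simp [gdistToSet, pi_pos.le]
  · have hbdd : BddBelow (gdist y '' B) := ⟨0, by rintro _ ⟨_, _, rfl⟩; exact arccos_nonneg _⟩
    exact (csInf_le hbdd ⟨b, hb, rfl⟩).trans (arccos_le_pi _)

lemma gdistToSet_le_geoHausdorff (U : Set E3) {V : Set E3} {p : E3} (hp : p ∈ V) :
    gdistToSet p U ≤ geoHausdorff U V := by
  have hbdd : BddAbove (range fun z => ⨆ _ : z ∈ V, gdistToSet z U) :=
    ⟨π, by rintro _ ⟨z, rfl⟩; exact Real.iSup_le (fun _ => gdistToSet_le_pi z U) pi_pos.le⟩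
  calc gdistToSet p U = ⨆ _ : p ∈ V, gdistToSet p U :=
        (ciSup_pos (f := fun _ => gdistToSet p U) hp).symm
    _ ≤ ⨆ z ∈ V, gdistToSet z U := le_ciSup hbdd p
    _ ≤ geoHausdorff U V := le_max_right _ _

lemma exists_gdist_lt_of_gdistToSet_lt {U : Set E3} (hU : U.Nonempty) {p : E3} {d : ℝ}
    (h : gdistToSet p U < d) : ∃ x ∈ U, gdist p x < d := by
  obtain ⟨_, ⟨x, hx, rfl⟩, hlt⟩ := exists_lt_of_csInf_lt (hU.image _) h
  exact ⟨x, hx, hlt⟩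

theorem stmt12_general (C : ℕ → Set E3) (Cstar : Set E3)
    (hC : ∀ n, (C n).Nonempty ∧ IsClosed (C n) ∧ C n ⊆ sphere2 ∧ SphConvex (C n) ∧
      ∃ v ∈ sphere2, ∀ q ∈ C n, rinner q v > 0)
    (hconv : Filter.Tendsto (fun n => geoHausdorff (C n) Cstar) Filter.atTop (nhds 0))
    (y : E3) (hy : y ∈ sphere2) (ε : ℝ) (hε : 0 < ε) (hε' : ε < Real.pi / 2)
    (hball : cap y ε ⊆ Cstar) :
    ∃ N : ℕ, ∀ n > N, cap y (ε / 2) ⊆ C n := by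
  have hunit : ∀ {p : E3}, p ∈ sphere2 → ‖p‖ = 1 := mem_sphere_zero_iff_norm.mp
  obtain ⟨N, hN⟩ := eventually_atTop.mp (hconv.eventually_lt_const (by positivity : 0 < ε / 4))
  refine ⟨N, fun n hn q ⟨hq, hyq⟩ => by_contra fun hqn => ?_⟩
  obtain ⟨hne, hcl, hsub, hsc, v, -, hv⟩ := hC n
  have hanti : ∀ x ∈ C n, -x ∉ C n := fun x hx hx' => by
    have h₁ := hv x hx
    have h₂ := hv _ hx'
    simp only [rinner, inner_neg_left] at h₁ h₂
    linarith
  obtain ⟨z, hz, hqz, hCz⟩ := hsc.exists_inner_pos_of_notMem hcl hsub hanti (hunit hq) hqn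
  obtain ⟨p, hp, hqp, hpz⟩ := exists_angle_le_and_angle_le_pi_div_two_sub (hunit hq) hz hqz.le
    (ρ := ε / 4) (by positivity) (by linarith)
  have hpCs : p ∈ Cstar := by
    refine hball ⟨mem_sphere_zero_iff_norm.mpr hp, ?_⟩
    rw [gdist_eq_angle (hunit hy) (hunit hq)] at hyq
    rw [gdist_eq_angle (hunit hy) hp]
    linarith [angle_le_angle_add_angle y q p]
  obtain ⟨x, hx, hpx⟩ := exists_gdist_lt_of_gdistToSet_lt hne
    ((gdistToSet_le_geoHausdorff (C n) hpCs).trans_lt (hN n hn.le))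
  rw [gdist_eq_angle hp (hunit (hsub hx)), angle_comm] at hpx
  have hxz : angle x z < π / 2 := by linarith [angle_le_angle_add_angle x p z]
  exact (hCz x hx).not_gt (inner_pos_of_angle_lt_pi_div_two hxz)

/-- a geodesic ball contained in the Hausdorff limit is eventually
(at half its radius) contained in the approximating convex sets. -/
theorem stmt12 (C : ℕ → Set E3) (Cstar : Set E3)
    (hC : ∀ n, (C n).Nonempty ∧ IsClosed (C n) ∧ C n ⊆ sphere2 ∧ SphConvex (C n) ∧
      ∃ v ∈ sphere2, ∀ q ∈ C n, rinner q v > 0)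
    (hCs : Cstar.Nonempty ∧ IsClosed Cstar ∧ Cstar ⊆ sphere2)
    (hconv : Filter.Tendsto (fun n => geoHausdorff (C n) Cstar) Filter.atTop (nhds 0))
    (y : E3) (hy : y ∈ sphere2) (ε : ℝ) (hε : 0 < ε) (hε' : ε < Real.pi / 2)
    (hball : cap y ε ⊆ Cstar) :
    ∃ N : ℕ, ∀ n > N, cap y (ε / 2) ⊆ C n :=
  stmt12_general C Cstar hC hconv y hy ε hε hε' hball

end
end

section
/- Let M ⊆ 𝕊² be an orthogonal-pair-free set, and define G(M) = ⋃_{y∈M} G(y), M₁ = {z ∈ 𝕊² : G(z) ⊆ G(M)}, M₂ = M₁ \ G(M). For x ∈ M₂, let [x] = {y ∈ M₂ : x ∼ y} denote the equivalence class of x under ∼. Then [x] is a spherically convex set and [x] ⊆ M₂. -/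
open Metric Set MeasureTheory Filter
open scoped ENNReal Topology

noncomputable section

/-!
The great circle `G(p)` meets `arc a c` exactly when `⟨a,p⟩⟨c,p⟩ ≤ 0`; call the set of such `p`
the lune of `a, c`. So an arc lies in `M₁` iff its lune lies in `G(M)`. If `⟨s₀,p⟩⟨s_m,p⟩ ≤ 0`
along a chain `s₀, …, s_m`, the sign of `⟨s_l,p⟩` changes on some link, so the lune of the
endpoints is covered by the lunes of the links. Hence two points of a class are joined by an arc
in `M₁`, and every point of that arc lies in the class. Orthogonal-pair-freeness gives
`M₁ ∩ G(M) = ∅`, i.e. `M₂ = M₁`.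
-/

theorem zero_notMem_segment_of_ne_neg {E : Type*} [NormedAddCommGroup E] [NormedSpace ℝ E]
    {a c : E} (ha : ‖a‖ = 1) (hc : ‖c‖ = 1) (hac : a ≠ -c) : (0 : E) ∉ segment ℝ a c := by
  intro h0
  rw [mem_segment_iff_sameRay, zero_sub, sub_zero] at h0
  have h := h0.inv_norm_smul_eq (neg_ne_zero.mpr (norm_ne_zero_iff.mp (by simp [ha])))
    (norm_ne_zero_iff.mp (by simp [hc]))
  rw [norm_neg, ha, hc, inv_one, one_smul, one_smul] at h
  exact hac (neg_eq_iff_eq_neg.mp h)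

theorem arc_subset_sphere2 {a c : E3} (ha : ‖a‖ = 1) (hc : ‖c‖ = 1) (hac : a ≠ -c) :
    arc a c ⊆ sphere2 := by
  rintro _ ⟨u, hu, rfl⟩
  have hu0 : u ≠ 0 := fun h ↦ zero_notMem_segment_of_ne_neg ha hc hac (h ▸ hu)
  exact mem_sphere_zero_iff_norm.mpr (norm_smul_inv_norm (𝕜 := ℝ) hu0)

theorem ne_neg_of_mem_arc {y z w : E3} (hy : ‖y‖ = 1) (hz : ‖z‖ = 1) (hyz : y ≠ -z)
    (hw : w ∈ arc y z) : y ≠ -w := by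
  obtain ⟨u, hu, rfl⟩ := hw
  intro h
  have h0 : (0 : E3) ∈ segment ℝ y u := by
    rw [mem_segment_iff_sameRay, zero_sub, sub_zero, h, neg_neg]
    exact SameRay.sameRay_nonneg_smul_left u (inv_nonneg.mpr (norm_nonneg u))
  exact zero_notMem_segment_of_ne_neg hy hz hyz
    ((convex_segment y z).segment_subset (left_mem_segment ℝ y z) hu h0)

theorem rinner_normalize_eq_zero_iff (u p : E3) :
    rinner (‖u‖⁻¹ • u) p = 0 ↔ rinner u p = 0 := by
  rcases eq_or_ne u 0 with rfl | hu
  · simp [rinner]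
  · simp [rinner, real_inner_smul_left, hu]

def lune (a c : E3) : Set E3 := {p ∈ sphere2 | rinner a p * rinner c p ≤ 0}

theorem lune_comm (a c : E3) : lune a c = lune c a := by
  simp only [lune, mul_comm]

theorem mem_lune_of_mem_arc {a c w p : E3} (hw : w ∈ arc a c) (hp : p ∈ polarGC w) :
    p ∈ lune a c := by
  obtain ⟨_, ⟨t₁, t₂, ht₁, ht₂, ht, rfl⟩, rfl⟩ := hw
  have h := (rinner_normalize_eq_zero_iff _ p).mp hp.2
  simp only [rinner, inner_add_left, real_inner_smul_left] at h
  refine ⟨hp.1, show inner ℝ a p * inner ℝ c p ≤ 0 from ?_⟩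
  have key : inner ℝ a p * inner ℝ c p = -(t₁ * inner ℝ a p ^ 2 + t₂ * inner ℝ c p ^ 2) := by
    linear_combination (inner ℝ a p + inner ℝ c p) * h - inner ℝ a p * inner ℝ c p * ht
  rw [key, neg_nonpos]
  positivity

theorem exists_mem_arc_of_mem_lune {a c p : E3} (hp : p ∈ lune a c) :
    ∃ w ∈ arc a c, p ∈ polarGC w := by
  have hcont : ContinuousOn (fun u ↦ rinner u p) (segment ℝ a c) :=
    (continuous_id.inner continuous_const).continuousOn
  have hzero : (0 : ℝ) ∈ uIcc (rinner a p) (rinner c p) := by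
    rcases mul_nonpos_iff.mp hp.2 with h | h
    · exact Set.mem_uIcc.mpr (Or.inr ⟨h.2, h.1⟩)
    · exact Set.mem_uIcc.mpr (Or.inl ⟨h.1, h.2⟩)
  obtain ⟨u, hu, hup⟩ :=
    ((convex_segment a c).isPreconnected.image _ hcont).ordConnected.uIcc_subset
      (mem_image_of_mem _ (left_mem_segment ℝ a c))
      (mem_image_of_mem _ (right_mem_segment ℝ a c)) hzero
  exact ⟨_, mem_image_of_mem _ hu, hp.1, (rinner_normalize_eq_zero_iff u p).mpr hup⟩

theorem lune_subset_union (a b c : E3) : lune a c ⊆ lune a b ∪ lune b c := by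
  rintro p ⟨hp, hac⟩
  by_contra! h
  simp only [mem_union, lune, mem_ofPred_eq, hp, true_and, not_or, not_le] at h
  nlinarith [mul_pos h.1 h.2, mul_nonpos_of_nonneg_of_nonpos (mul_self_nonneg (rinner b p)) hac]

theorem lune_subset_lune_of_mem_arc {y z w : E3} (hw : w ∈ arc y z) (hw0 : w ≠ 0) :
    lune y w ⊆ lune y z := by
  obtain ⟨u, ⟨t₁, t₂, ht₁, ht₂, ht, rfl⟩, rfl⟩ := hw
  have hk : 0 < ‖t₁ • y + t₂ • z‖⁻¹ := by
    refine inv_pos.mpr (norm_pos_iff.mpr fun h ↦ hw0 ?_)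
    simp [h]
  rintro p ⟨hp, hyw⟩
  simp only [rinner, inner_add_left, real_inner_smul_left] at hyw
  refine ⟨hp, show inner ℝ y p * inner ℝ z p ≤ 0 from ?_⟩
  have h₁ : inner ℝ y p * (t₁ * inner ℝ y p + t₂ * inner ℝ z p) ≤ 0 := by nlinarith
  rcases ht₂.eq_or_lt with rfl | ht₂
  · have hyy : inner ℝ y p * inner ℝ y p ≤ 0 := by simpa [show t₁ = 1 by linarith] using h₁
    simp [mul_self_eq_zero.mp (le_antisymm hyy (mul_self_nonneg _))]
  · nlinarith [mul_nonneg ht₁ (mul_self_nonneg (inner ℝ y p))]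

theorem arc_subset_Mone_iff {M : Set E3} {a c : E3} (hs : arc a c ⊆ sphere2) :
    arc a c ⊆ Mone M ↔ lune a c ⊆ GM M :=
  ⟨fun h _ hp ↦ let ⟨_, hw, hpw⟩ := exists_mem_arc_of_mem_lune hp; (h hw).2 hpw,
    fun h _ hw ↦ ⟨hs hw, fun _ hp ↦ h (mem_lune_of_mem_arc hw hp)⟩⟩

theorem exists_lt_mul_succ_nonpos {R : Type*} [CommRing R] [LinearOrder R]
    [IsStrictOrderedRing R] {f : ℕ → R} (h₀ : f 0 ≠ 0) :
    ∀ {m : ℕ}, f 0 * f m ≤ 0 → ∃ l < m, f l * f (l + 1) ≤ 0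
  | 0, h => absurd (mul_self_eq_zero.mp (le_antisymm h (mul_self_nonneg _))) h₀
  | m + 1, h => by
    by_cases hm : f 0 * f m ≤ 0
    · obtain ⟨l, hl, hl'⟩ := exists_lt_mul_succ_nonpos h₀ hm
      exact ⟨l, hl.trans (Nat.lt_succ_self m), hl'⟩
    · refine ⟨m, Nat.lt_succ_self m, ?_⟩
      nlinarith [mul_nonpos_of_nonneg_of_nonpos (mul_self_nonneg (f m)) h]

theorem lune_subset_GM_of_chainRel {M : Set E3} {x y : E3} (hx : x ∈ Mone M)
    (h : chainRel (Mone M) x y) : lune x y ⊆ GM M := by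
  obtain ⟨m, s, rfl, rfl, hs⟩ := h
  rintro p ⟨hp, hsign⟩
  by_cases h₀ : rinner (s 0) p = 0
  · exact hx.2 ⟨hp, h₀⟩
  obtain ⟨l, hl, hl'⟩ := exists_lt_mul_succ_nonpos (f := fun l ↦ rinner (s l) p) h₀ hsign
  exact (arc_subset_Mone_iff ((hs l hl).2.trans fun _ hw ↦ hw.1)).mp (hs l hl).2 ⟨hp, hl'⟩

theorem chainRel_snoc {A : Set E3} {x y w : E3} (h : chainRel A x y) (hyw : y ≠ -w)
    (harc : arc y w ⊆ A) : chainRel A x w := by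
  obtain ⟨m, s, hs₀, hsm, hs⟩ := h
  refine ⟨m + 1, fun l ↦ if l ≤ m then s l else w, by simpa using hs₀, by simp, fun l hl ↦ ?_⟩
  rcases Nat.lt_succ_iff_lt_or_eq.mp hl with hl | rfl
  · simpa [hl.le, Nat.succ_le_of_lt hl] using hs l hl
  · simpa [hsm] using And.intro hyw harc

theorem disjoint_Mone_GM {M : Set E3} (hM : M ⊆ sphere2) (hOPF : OPF M) :
    Disjoint (Mone M) (GM M) := by
  rw [Set.disjoint_left]
  intro z hz hzG
  obtain ⟨m, hm, hzm⟩ := mem_iUnion₂.mp hzG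
  have hmG : m ∈ GM M := hz.2 ⟨hM hm, by rw [rinner, real_inner_comm]; exact hzm.2⟩
  obtain ⟨m', hm', hmm'⟩ := mem_iUnion₂.mp hmG
  rcases eq_or_ne m' m with rfl | hne
  · have h1 : rinner m' m' = 1 := by
      rw [rinner, real_inner_self_eq_norm_sq, mem_sphere_zero_iff_norm.mp (hM hm'), one_pow]
    exact one_ne_zero (h1.symm.trans hmm'.2)
  · exact hOPF m' hm' m hm hne hmm'.2

theorem Mtwo_eq_Mone {M : Set E3} (hM : M ⊆ sphere2) (hOPF : OPF M) : Mtwo M = Mone M :=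
  (disjoint_Mone_GM hM hOPF).sdiff_eq_left

/-- every ∼-equivalence class in M₂ is spherically convex and ⊆ M₂. -/
theorem stmt13 (M : Set E3) (hM : M ⊆ sphere2) (hOPF : OPF M)
    (x : E3) (hx : x ∈ Mtwo M) :
    SphConvex {y ∈ Mtwo M | chainRel (Mtwo M) x y} ∧
    {y ∈ Mtwo M | chainRel (Mtwo M) x y} ⊆ Mtwo M := by
  rw [Mtwo_eq_Mone hM hOPF] at hx ⊢
  refine ⟨?_, sep_subset _ _⟩
  rintro y ⟨hy, hxy⟩ z ⟨hz, hxz⟩ hyz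
  have hy₁ : ‖y‖ = 1 := mem_sphere_zero_iff_norm.mp hy.1
  have hz₁ : ‖z‖ = 1 := mem_sphere_zero_iff_norm.mp hz.1
  have hlune : lune y z ⊆ GM M :=
    (lune_subset_union y x z).trans <| union_subset
      (lune_comm x y ▸ lune_subset_GM_of_chainRel hx hxy) (lune_subset_GM_of_chainRel hx hxz)
  have harc : arc y z ⊆ Mone M := (arc_subset_Mone_iff (arc_subset_sphere2 hy₁ hz₁ hyz)).mpr hlune
  intro w hw
  have hw₁ : ‖w‖ = 1 := mem_sphere_zero_iff_norm.mp (harc hw).1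
  have hyw : y ≠ -w := ne_neg_of_mem_arc hy₁ hz₁ hyz hw
  have hyw_arc : arc y w ⊆ Mone M := (arc_subset_Mone_iff (arc_subset_sphere2 hy₁ hw₁ hyw)).mpr
    ((lune_subset_lune_of_mem_arc hw (norm_ne_zero_iff.mp (by simp [hw₁]))).trans hlune)
  exact ⟨harc hw, chainRel_snoc hxy hyw hyw_arc⟩

end
end

section
/- Let N = E₁ ∪ … ∪ E_w, where E₁, …, E_w are pairwise disjoint spherically convex subsets of 𝕊², each with nonempty interior relative to 𝕊², and suppose N is orthogonal-pair-free. Let i ≠ j and let p be a point in the intersection of the boundaries (relative to 𝕊²) of E_i and E_j. Then the set int(N) ∪ {p} is orthogonal-pair-free, where int(N) denotes the interior of N relative to 𝕊². -/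
open Metric Set MeasureTheory Filter
open scoped ENNReal Topology

noncomputable section

/-!
If `q ∈ int(N)` were orthogonal to `p ∈ closure N`, pick `v ∈ N` close to `p`;
the normalised component of `q` orthogonal to `v` is close to `q`, hence lies in `N`, and it is
orthogonal to `v`, an orthogonal pair inside `N`.
-/

section Rejection

variable {E : Type*} [NormedAddCommGroup E] [InnerProductSpace ℝ E]

/-- The component of `q` orthogonal to `v`, when `v` is a unit vector. -/
def rejection (v q : E) : E := q - inner ℝ q v • v

lemma inner_rejection_left {v : E} (hv : ‖v‖ = 1) (q : E) : inner ℝ (rejection v q) v = 0 := by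
  rw [rejection, inner_sub_left, real_inner_smul_left, real_inner_self_eq_norm_sq, hv]
  ring

lemma continuous_rejection (q : E) : Continuous fun v : E => rejection v q :=
  continuous_const.sub (((continuous_const (y := q)).inner continuous_id).smul continuous_id)

lemma rejection_of_inner_eq_zero {v q : E} (h : inner ℝ q v = 0) : rejection v q = q := by
  rw [rejection, h, zero_smul, sub_zero]

/-- The witness is the normalised rejection of `q` from `v`: it is continuous in `v` and equals
`q` at `v = p`. -/
lemma eventually_exists_unit_orthogonal {p q : E} (hq : ‖q‖ = 1) (hqp : inner ℝ q p = 0)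
    {U : Set E} (hU : U ∈ 𝓝 q) :
    ∀ᶠ v in 𝓝 p, ‖v‖ = 1 → ∃ u ∈ U, ‖u‖ = 1 ∧ inner ℝ u v = 0 := by
  have hrej : rejection p q = q := rejection_of_inner_eq_zero hqp
  have hq0 : q ≠ 0 := norm_ne_zero_iff.1 (hq ▸ one_ne_zero)
  have hcont := (continuous_rejection q).continuousAt (x := p)
  have hnormalize : Tendsto (fun v => ‖rejection v q‖⁻¹ • rejection v q) (𝓝 p) (𝓝 q) := by
    have := (hcont.tendsto.norm.inv₀ (by rw [hrej, hq]; exact one_ne_zero)).smul hcont.tendsto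
    rwa [hrej, hq, inv_one, one_smul] at this
  filter_upwards [hnormalize hU, hcont.eventually_ne (hrej ▸ hq0)] with v hvU hv0 hv1
  refine ⟨_, hvU, norm_smul_inv_norm hv0, ?_⟩
  rw [real_inner_smul_left, inner_rejection_left hv1, mul_zero]

end Rejection

lemma relInterior_subset (N : Set E3) : relInterior N ⊆ N :=
  fun _ ⟨hx, _, _, hxU, hUN⟩ => hUN ⟨hxU, hx⟩

lemma rinner_ne_zero_of_mem_relInterior_of_mem_closure {N : Set E3} (hN : N ⊆ sphere2)
    (hOPF : OPF N) {p q : E3} (hq : q ∈ relInterior N) (hp : p ∈ closure N) : rinner q p ≠ 0 := by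
  intro hqp
  obtain ⟨hqS, U, hUo, hqU, hUN⟩ := hq
  obtain ⟨v, hvN, hv⟩ := ((mem_closure_iff_frequently.1 hp).and_eventually
    (eventually_exists_unit_orthogonal (mem_sphere_zero_iff_norm.1 hqS) hqp
      (hUo.mem_nhds hqU))).exists
  obtain ⟨u, huU, hu1, huv⟩ := hv (mem_sphere_zero_iff_norm.1 (hN hvN))
  refine hOPF u (hUN ⟨huU, mem_sphere_zero_iff_norm.2 hu1⟩) v hvN ?_ huv
  rintro rfl
  rw [real_inner_self_eq_norm_sq, hu1] at huv
  norm_num at huv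

lemma OPF.relInterior_union_singleton {N : Set E3} (hOPF : OPF N) (hN : N ⊆ sphere2) {p : E3}
    (hp : p ∈ closure N) : OPF (relInterior N ∪ {p}) := by
  have key := fun {q} hq => rinner_ne_zero_of_mem_relInterior_of_mem_closure hN hOPF (q := q) hq hp
  rintro a (ha | rfl) b (hb | rfl) hab
  · exact hOPF a (relInterior_subset N ha) b (relInterior_subset N hb) hab
  · exact key ha
  · rw [rinner, real_inner_comm]
    exact key hb
  · exact absurd rfl hab

theorem stmt16_general (w : ℕ) (Ee : Fin w → Set E3)
    (hconv : ∀ i, Ee i ⊆ sphere2 ∧ SphConvex (Ee i) ∧ (relInterior (Ee i)).Nonempty)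
    (hOPF : OPF (⋃ i, Ee i))
    (i j : Fin w)
    (p : E3) (hp : p ∈ relBd (Ee i) ∩ relBd (Ee j)) :
    OPF (relInterior (⋃ i, Ee i) ∪ {p}) :=
  hOPF.relInterior_union_singleton (iUnion_subset fun k => (hconv k).1)
    (closure_mono (subset_iUnion Ee i) hp.1.1)

/-- adding a common boundary point of two components to int(N)
preserves orthogonal-pair-freeness. -/
theorem stmt16 (w : ℕ) (Ee : Fin w → Set E3)
    (hconv : ∀ i, Ee i ⊆ sphere2 ∧ SphConvex (Ee i) ∧ (relInterior (Ee i)).Nonempty)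
    (hdisj : Pairwise fun i j => Ee i ∩ Ee j = ∅)
    (hOPF : OPF (⋃ i, Ee i))
    (i j : Fin w) (hij : i ≠ j)
    (p : E3) (hp : p ∈ relBd (Ee i) ∩ relBd (Ee j)) :
    OPF (relInterior (⋃ i, Ee i) ∪ {p}) :=
  stmt16_general w Ee hconv hOPF i j p hp

end
end

section
/- Let N₁ ⊆ 𝕊² be an orthogonal-pair-free set that is a union of w pairwise disjoint spherically convex sets. Then there exists an orthogonal-pair-free set N₂ ⊆ 𝕊² that is a union of w' pairwise disjoint spherically convex sets for some 1 ≤ w' ≤ w, such that the geodesic distance between any two of these w' convex sets is strictly positive, and μ(N₂) ≥ μ(N₁). -/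
open Metric Set MeasureTheory Filter
open scoped ENNReal Topology

noncomputable section

/-!
Null pieces can be discarded. An orthogonal-pair-free spherically convex piece of positive measure
is acute (all inner products positive): if `⟪a, b⟫ < 0`, the arc from `a` to `b` would contain a
point orthogonal to `a`.

As long as two pieces `A`, `B` are at distance `0`, they share a point `p` of their closures. By
connectedness the sign of `⟪a, b⟫` is constant on `A × B`, so it is positive; and for any other
piece `C` the sign of `⟪q, x⟫` (`q ∈ C`) is the same on `A` and on `B`, since otherwise `C` would
lie on the great circle polar to `p`, which is null. Hence `A ∪ B` may be replaced by the unit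
vectors of the convex cone it spans without creating orthogonal pairs. Each merge lowers the number
of pieces, so the process ends with pieces at pairwise positive distance covering all non-null
ones.
-/

namespace OrthogonalPairFree

open scoped RealInnerProductSpace

lemma _root_.IsPreconnected.pos_or_neg_of_ne_zero {α : Type*} [TopologicalSpace α] {s : Set α}
    (hs : IsPreconnected s) {f : α → ℝ} (hf : ContinuousOn f s) (h0 : ∀ x ∈ s, f x ≠ 0) :
    (∀ x ∈ s, 0 < f x) ∨ ∀ x ∈ s, f x < 0 := by
  by_contra! h
  obtain ⟨⟨x, hx, hfx⟩, y, hy, hfy⟩ := h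
  obtain ⟨z, hz, hfz⟩ := hs.intermediate_value hx hy hf ⟨hfx, hfy⟩
  exact h0 z hz hfz

section InnerProductSpace

variable {E : Type*} [NormedAddCommGroup E] [InnerProductSpace ℝ E]

lemma inner_pos_or_neg_of_isPreconnected {A B : Set E} (hA : IsPreconnected A)
    (hB : IsPreconnected B) (h : ∀ a ∈ A, ∀ b ∈ B, ⟪a, b⟫ ≠ 0) :
    (∀ a ∈ A, ∀ b ∈ B, 0 < ⟪a, b⟫) ∨ ∀ a ∈ A, ∀ b ∈ B, ⟪a, b⟫ < 0 := by
  refine ((hA.prod hB).pos_or_neg_of_ne_zero (f := fun x : E × E => ⟪x.1, x.2⟫)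
    (by fun_prop) (fun x hx => h x.1 hx.1 x.2 hx.2)).imp ?_ ?_ <;>
  exact fun h a ha b hb => h (a, b) ⟨ha, hb⟩

lemma inner_nonneg_of_mem_closure {S : Set E} {q : E} (h : ∀ a ∈ S, 0 ≤ ⟪q, a⟫) {p : E}
    (hp : p ∈ closure S) : 0 ≤ ⟪q, p⟫ :=
  closure_minimal (t := {x | 0 ≤ ⟪q, x⟫}) h
    (isClosed_le continuous_const (continuous_const.inner continuous_id)) hp

lemma inner_pos_of_mem_hull {S : Set E} {q : E} (h : ∀ a ∈ S, 0 < ⟪q, a⟫) {x : E}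
    (hx : x ∈ ConvexCone.hull ℝ S) : 0 < ⟪q, x⟫ :=
  ConvexCone.hull_min (C := (ConvexCone.strictlyPositive ℝ ℝ).comap (innerₛₗ ℝ q)) h hx

def IsAcute (S : Set E) : Prop := ∀ a ∈ S, ∀ b ∈ S, 0 < ⟪a, b⟫

lemma IsAcute.mono {S T : Set E} (hT : IsAcute T) (hST : S ⊆ T) : IsAcute S :=
  fun a ha b hb => hT a (hST ha) b (hST hb)

lemma IsAcute.hull {S : Set E} (hS : IsAcute S) : IsAcute (ConvexCone.hull ℝ S : Set E) := by
  intro x hx y hy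
  refine inner_pos_of_mem_hull (fun a ha => ?_) hy
  rw [real_inner_comm]
  exact inner_pos_of_mem_hull (hS a ha) hx

lemma IsAcute.ne_zero {S : Set E} (hS : IsAcute S) {x : E} (hx : x ∈ S) : x ≠ 0 := by
  rintro rfl
  simpa using hS 0 hx 0 hx

lemma ne_neg_of_inner_pos {x y : E} (h : 0 < ⟪x, y⟫) : x ≠ -y := by
  rintro rfl
  rw [inner_neg_left] at h
  linarith [real_inner_self_nonneg (x := y)]

lemma IsAcute.union_of_mem_closure {A B : Set E} (hA : IsAcute A) (hB : IsAcute B)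
    (hAc : IsPreconnected A) (hBc : IsPreconnected B) (hAB : ∀ a ∈ A, ∀ b ∈ B, ⟪a, b⟫ ≠ 0)
    {p : E} (hpA : p ∈ closure A) (hpB : p ∈ closure B) (hp : p ≠ 0) : IsAcute (A ∪ B) := by
  have hcross : ∀ a ∈ A, ∀ b ∈ B, 0 < ⟪a, b⟫ := by
    refine (inner_pos_or_neg_of_isPreconnected hAc hBc hAB).resolve_right fun hneg => hp ?_
    -- a negative sign would pass to the limit ⟪p, p⟫ ≤ 0
    have hpb : ∀ b ∈ B, 0 ≤ ⟪-p, b⟫ := fun b hb => by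
      have := inner_nonneg_of_mem_closure (q := -b) (fun a ha => ?_) hpA
      · rwa [inner_neg_left, real_inner_comm, ← inner_neg_left] at this
      · rw [inner_neg_left, real_inner_comm]
        exact neg_nonneg.2 (hneg a ha b hb).le
    have := inner_nonneg_of_mem_closure hpb hpB
    rw [inner_neg_left, neg_nonneg] at this
    exact inner_self_eq_zero.1 (le_antisymm this real_inner_self_nonneg)
  rintro x (hx | hx) y (hy | hy)
  · exact hA x hx y hy
  · exact hcross x hx y hy
  · rw [real_inner_comm]
    exact hcross y hy x hx
  · exact hB x hx y hy

end InnerProductSpace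

lemma measure_iUnion_le_of_forall_subset {α ι κ : Type*} [MeasurableSpace α] [Countable ι]
    {μ : Measure α} {D : ι → Set α} {E : κ → Set α} (h : ∀ i, μ (D i) ≠ 0 → ∃ j, D i ⊆ E j) :
    μ (⋃ i, D i) ≤ μ (⋃ j, E j) := by
  have hnull : ∀ᵐ x ∂μ, ∀ i, μ (D i) = 0 → x ∉ D i := by
    refine ae_all_iff.2 fun i => ?_
    by_cases hi : μ (D i) = 0
    · exact (measure_eq_zero_iff_ae_notMem.1 hi).mono fun x hx _ => hx
    · exact ae_of_all _ fun x h0 => (hi h0).elim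
  refine measure_mono_ae ?_
  filter_upwards [hnull] with x hx hxD
  obtain ⟨i, hi⟩ := mem_iUnion.1 hxD
  obtain ⟨j, hj⟩ := h i fun h0 => hx i h0 hi
  exact mem_iUnion.2 ⟨j, hj hi⟩

lemma norm_eq_one_of_mem_sphere2 {p : E3} (hp : p ∈ sphere2) : ‖p‖ = 1 :=
  mem_sphere_zero_iff_norm.1 hp

lemma ne_zero_of_mem_sphere2 {p : E3} (hp : p ∈ sphere2) : p ≠ 0 :=
  norm_ne_zero_iff.1 (by simp [norm_eq_one_of_mem_sphere2 hp])

lemma inner_self_of_mem_sphere2 {p : E3} (hp : p ∈ sphere2) : ⟪p, p⟫ = 1 := by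
  rw [real_inner_self_eq_norm_sq, norm_eq_one_of_mem_sphere2 hp, one_pow]

lemma inv_norm_smul_mem_sphere2 {u : E3} (hu : u ≠ 0) : ‖u‖⁻¹ • u ∈ sphere2 :=
  mem_sphere_zero_iff_norm.2 (norm_smul_inv_norm hu)

lemma inv_norm_smul_of_mem_sphere2 {p : E3} (hp : p ∈ sphere2) : ‖p‖⁻¹ • p = p := by
  rw [norm_eq_one_of_mem_sphere2 hp, inv_one, one_smul]

lemma closure_subset_sphere2 {A : Set E3} (hA : A ⊆ sphere2) : closure A ⊆ sphere2 :=
  closure_minimal hA isClosed_sphere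

lemma sigmaM_pair_eq_zero (x y : E3) : sigmaM {x, y} = 0 := by
  have : NullSingletonClass sigmaM := Measure.nullSingletonClass_hausdorff E3 two_pos
  exact (Set.toFinite _).measure_zero _

-- a great circle is a smooth image of ℝ, so it has Hausdorff dimension 1
lemma sigmaM_polarGC_eq_zero {p : E3} (hp : p ≠ 0) : sigmaM (polarGC p) = 0 := by
  have : Fact (Module.finrank ℝ E3 = 2 + 1) := ⟨by simp⟩
  set K := (ℝ ∙ p)ᗮ
  have hK : Module.finrank ℝ K = 2 := Submodule.finrank_orthogonal_span_singleton hp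
  let φ : ℂ ≃ₗᵢ[ℝ] K := Complex.orthonormalBasisOneI.repr.trans
    ((stdOrthonormalBasis ℝ K).reindex (finCongr hK)).repr.symm
  let L : ℂ →L[ℝ] E3 := K.subtypeL.comp φ.toContinuousLinearEquiv.toContinuousLinearMap
  let γ : ℝ → E3 := fun t => L (Complex.exp (t * Complex.I))
  have hγ : ContDiff ℝ 1 γ :=
    L.contDiff.comp (Complex.contDiff_exp.comp (Complex.ofRealCLM.contDiff.mul contDiff_const))
  have hsub : polarGC p ⊆ range γ := by
    rintro z ⟨hz1, hz2⟩
    have hzK : z ∈ K := Submodule.mem_orthogonal_singleton_iff_inner_right.2 hz2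
    refine ⟨Complex.arg (φ.symm ⟨z, hzK⟩), ?_⟩
    have h1 : ‖φ.symm ⟨z, hzK⟩‖ = 1 := by
      rw [LinearIsometryEquiv.norm_map]
      exact norm_eq_one_of_mem_sphere2 hz1
    have := Complex.norm_mul_exp_arg_mul_I (φ.symm ⟨z, hzK⟩)
    rw [h1, Complex.ofReal_one, one_mul] at this
    simp [γ, L, this]
  refine measure_mono_null hsub (hausdorffMeasure_of_dimH_lt (d := 2) ?_)
  calc dimH (range γ) ≤ Module.finrank ℝ ℝ := hγ.dimH_range_le
    _ < 2 := by norm_num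

lemma mem_arc_left {x : E3} (hx : x ∈ sphere2) (y : E3) : x ∈ arc x y :=
  ⟨x, left_mem_segment ℝ x y, inv_norm_smul_of_mem_sphere2 hx⟩

lemma mem_arc_right (x : E3) {y : E3} (hy : y ∈ sphere2) : y ∈ arc x y :=
  ⟨y, right_mem_segment ℝ x y, inv_norm_smul_of_mem_sphere2 hy⟩

lemma isPreconnected_arc {x y : E3} (hxy : IsAcute ({x, y} : Set E3)) :
    IsPreconnected (arc x y) := by
  have hseg : segment ℝ x y ⊆ ConvexCone.hull ℝ {x, y} :=
    (ConvexCone.hull ℝ _).convex.segment_subset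
      (ConvexCone.subset_hull (mem_insert x _)) (ConvexCone.subset_hull (mem_insert_of_mem x rfl))
  refine (convex_segment x y).isPreconnected.image _ ?_
  refine (continuousOn_id.norm.inv₀ fun m hm => ?_).smul continuousOn_id
  exact norm_ne_zero_iff.2 (hxy.hull.ne_zero (hseg hm))

lemma isPreconnected_of_sphConvex {C : Set E3} (hC : SphConvex C) (hCs : C ⊆ sphere2)
    (hac : IsAcute C) : IsPreconnected C :=
  isPreconnected_of_forall_pair fun x hx y hy =>
    ⟨arc x y, hC x hx y hy (ne_neg_of_inner_pos (hac x hx y hy)),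
      mem_arc_left (hCs hx) y, mem_arc_right x (hCs hy),
      isPreconnected_arc (hac.mono (insert_subset hx (singleton_subset_iff.2 hy)))⟩

def sphHull (S : Set E3) : Set E3 := sphere2 ∩ ConvexCone.hull ℝ S

lemma subset_sphHull {S : Set E3} (hS : S ⊆ sphere2) : S ⊆ sphHull S :=
  fun _ hx => ⟨hS hx, ConvexCone.subset_hull hx⟩

lemma isAcute_sphHull {S : Set E3} (hS : IsAcute S) : IsAcute (sphHull S) :=
  hS.hull.mono inter_subset_right

lemma sphConvex_sphHull {S : Set E3} (hS : IsAcute S) : SphConvex (sphHull S) := by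
  rintro x hx y hy - _ ⟨m, hm, rfl⟩
  have hmK : m ∈ ConvexCone.hull ℝ S := (ConvexCone.hull ℝ S).convex.segment_subset hx.2 hy.2 hm
  have hm0 : m ≠ 0 := hS.hull.ne_zero hmK
  exact ⟨inv_norm_smul_mem_sphere2 hm0,
    (ConvexCone.hull ℝ S).smul_mem (inv_pos.2 (norm_pos_iff.2 hm0)) hmK⟩

lemma OPF.mono {A B : Set E3} (hB : OPF B) (hAB : A ⊆ B) : OPF A :=
  fun p hp q hq hpq => hB p (hAB hp) q (hAB hq) hpq

lemma inner_nonneg_of_OPF {C : Set E3} (hopf : OPF C) (hCs : C ⊆ sphere2) (hC : SphConvex C)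
    {a b : E3} (ha : a ∈ C) (hb : b ∈ C) (hab : a ≠ -b) : 0 ≤ ⟪a, b⟫ := by
  by_contra! hneg
  set r := ⟪a, b⟫
  have hr : 0 < 1 - r := by linarith
  -- the point of the chord from a to b orthogonal to a
  set m : E3 := (1 - r)⁻¹ • (b - r • a)
  have hm : m ∈ segment ℝ a b :=
    ⟨-r / (1 - r), (1 - r)⁻¹, div_nonneg (by linarith) hr.le, inv_nonneg.2 hr.le,
      by field_simp; ring, by simp only [m, smul_sub, smul_smul]; module⟩
  have ham : ⟪a, m⟫ = 0 := by
    simp only [m, inner_smul_right, inner_sub_right, inner_self_of_mem_sphere2 (hCs ha), r]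
    ring
  have hz : ⟪a, ‖m‖⁻¹ • m⟫ = 0 := by rw [inner_smul_right, ham, mul_zero]
  refine hopf a ha _ (hC a ha b hb hab ⟨m, hm, rfl⟩) (fun h : a = ‖m‖⁻¹ • m => ?_) hz
  rw [← h, inner_self_of_mem_sphere2 (hCs ha)] at hz
  exact one_ne_zero hz

lemma isAcute_of_OPF {C : Set E3} (hopf : OPF C) (hCs : C ⊆ sphere2) (hC : SphConvex C)
    (hnull : sigmaM C ≠ 0) : IsAcute C := by
  have key : ∀ a ∈ C, ∀ b ∈ C, a ≠ -b → 0 < ⟪a, b⟫ := by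
    intro a ha b hb hab
    rcases eq_or_ne a b with rfl | hne
    · rw [inner_self_of_mem_sphere2 (hCs ha)]
      exact one_pos
    · exact (inner_nonneg_of_OPF hopf hCs hC ha hb hab).lt_of_ne' (hopf a ha b hb hne)
  intro a ha b hb
  by_cases hab : a = -b
  · subst hab
    -- the antipodal pair is σ-null, so C has a third point z; it cannot be acute to both -b and b
    obtain ⟨z, hz, hzb⟩ : ∃ z ∈ C, z ∉ ({-b, b} : Set E3) :=
      not_subset.1 fun h => hnull (measure_mono_null h (sigmaM_pair_eq_zero _ _))
    simp only [mem_insert_iff, mem_singleton_iff, not_or] at hzb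
    have h1 := key _ ha z hz fun h => hzb.2 (neg_injective h).symm
    have h2 := key b hb z hz fun h => hzb.1 (by rw [h, neg_neg])
    rw [inner_neg_left] at h1
    linarith
  · exact key a ha b hb hab

structure IsAcutePiece (A : Set E3) : Prop where
  subset_sphere2 : A ⊆ sphere2
  sphConvex : SphConvex A
  isAcute : IsAcute A
  measure_ne_zero : sigmaM A ≠ 0

lemma IsAcutePiece.isPreconnected {A : Set E3} (hA : IsAcutePiece A) : IsPreconnected A :=
  isPreconnected_of_sphConvex hA.sphConvex hA.subset_sphere2 hA.isAcute

lemma exists_mem_closure_inter_of_gsetDist_nonpos {A B : Set E3} (hA : A ⊆ sphere2)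
    (hB : B ⊆ sphere2) (hAne : A.Nonempty) (hBne : B.Nonempty) (h : gsetDist A B ≤ 0) :
    ∃ p ∈ closure A, p ∈ closure B := by
  have hK : IsCompact (closure A ×ˢ closure B) :=
    ((isCompact_sphere 0 1).of_isClosed_subset isClosed_closure (closure_subset_sphere2 hA)).prod
      ((isCompact_sphere 0 1).of_isClosed_subset isClosed_closure (closure_subset_sphere2 hB))
  have hcont : Continuous fun x : E3 × E3 => gdist x.1 x.2 :=
    Real.continuous_arccos.comp (continuous_fst.inner continuous_snd)
  obtain ⟨⟨p, q⟩, hmem, hmin⟩ :=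
    hK.exists_isMinOn (hAne.closure.prod hBne.closure) hcont.continuousOn
  obtain ⟨hp, hq⟩ : p ∈ closure A ∧ q ∈ closure B := hmem
  have hpq : gdist p q ≤ 0 := by
    refine le_trans (le_csInf (hAne.image2 hBne) ?_) h
    rintro _ ⟨a, ha, b, hb, rfl⟩
    exact isMinOn_iff.1 hmin (a, b) ⟨subset_closure ha, subset_closure hb⟩
  have hp1 := norm_eq_one_of_mem_sphere2 (closure_subset_sphere2 hA hp)
  have hq1 := norm_eq_one_of_mem_sphere2 (closure_subset_sphere2 hB hq)
  have hinner : ⟪p, q⟫ = 1 :=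
    le_antisymm (by simpa [hp1, hq1] using real_inner_le_norm p q)
      (Real.arccos_eq_zero.1 (le_antisymm hpq (Real.arccos_nonneg _)))
  obtain rfl := (inner_eq_one_iff_of_norm_eq_one hp1 hq1).1 hinner
  exact ⟨p, hp, hq⟩

lemma subset_polarGC_of_inner_pos_of_inner_neg {A B C : Set E3} (hC : C ⊆ sphere2)
    (hA : ∀ q ∈ C, ∀ a ∈ A, 0 < ⟪q, a⟫) (hB : ∀ q ∈ C, ∀ b ∈ B, ⟪q, b⟫ < 0) {p : E3}
    (hpA : p ∈ closure A) (hpB : p ∈ closure B) : C ⊆ polarGC p := by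
  intro q hq
  have h1 := inner_nonneg_of_mem_closure (fun a ha => (hA q hq a ha).le) hpA
  have h2 := inner_nonneg_of_mem_closure (q := -q)
    (fun b hb => by rw [inner_neg_left]; exact neg_nonneg.2 (hB q hq b hb).le) hpB
  rw [inner_neg_left, neg_nonneg] at h2
  exact ⟨hC hq, by rw [rinner, real_inner_comm]; exact le_antisymm h2 h1⟩

lemma inner_ne_zero_of_mem_sphHull {A B C : Set E3} (hC : IsAcutePiece C)
    (hAc : IsPreconnected A) (hBc : IsPreconnected B) {p : E3} (hpA : p ∈ closure A)
    (hpB : p ∈ closure B) (hp : p ≠ 0) (hCA : ∀ q ∈ C, ∀ a ∈ A, ⟪q, a⟫ ≠ 0)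
    (hCB : ∀ q ∈ C, ∀ b ∈ B, ⟪q, b⟫ ≠ 0) : ∀ q ∈ C, ∀ x ∈ sphHull (A ∪ B), ⟪q, x⟫ ≠ 0 := by
  have hnot : ¬ C ⊆ polarGC p := fun h =>
    hC.measure_ne_zero (measure_mono_null h (sigmaM_polarGC_eq_zero hp))
  intro q hq x hx
  rcases inner_pos_or_neg_of_isPreconnected hC.isPreconnected hAc hCA with hA | hA <;>
    rcases inner_pos_or_neg_of_isPreconnected hC.isPreconnected hBc hCB with hB | hB
  · exact (inner_pos_of_mem_hull (fun y hy => hy.elim (hA q hq y) (hB q hq y)) hx.2).ne'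
  · exact (hnot (subset_polarGC_of_inner_pos_of_inner_neg hC.subset_sphere2 hA hB hpA hpB)).elim
  · exact (hnot (subset_polarGC_of_inner_pos_of_inner_neg hC.subset_sphere2 hB hA hpB hpA)).elim
  · have := inner_pos_of_mem_hull (q := -q) (fun y hy => ?_) hx.2
    · rw [inner_neg_left] at this
      exact (neg_pos.1 this).ne
    · rw [inner_neg_left, neg_pos]
      exact hy.elim (hA q hq y) (hB q hq y)

structure IsAcuteOPFFamily (F : Finset (Set E3)) : Prop where
  isAcutePiece : ∀ A ∈ F, IsAcutePiece A
  inner_ne_zero : ∀ A ∈ F, ∀ B ∈ F, A ≠ B → ∀ a ∈ A, ∀ b ∈ B, ⟪a, b⟫ ≠ 0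

lemma IsAcuteOPFFamily.merge {F : Finset (Set E3)} (hF : IsAcuteOPFFamily F) {A B : Set E3}
    (hA : A ∈ F) (hB : B ∈ F) (hAB : A ≠ B) (hd : gsetDist A B ≤ 0) :
    IsAcuteOPFFamily (insert (sphHull (A ∪ B)) ((F.erase A).erase B)) := by
  have hPA := hF.isAcutePiece A hA
  have hPB := hF.isAcutePiece B hB
  obtain ⟨p, hpA, hpB⟩ := exists_mem_closure_inter_of_gsetDist_nonpos hPA.subset_sphere2
    hPB.subset_sphere2 (nonempty_of_measure_ne_zero hPA.measure_ne_zero)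
    (nonempty_of_measure_ne_zero hPB.measure_ne_zero) hd
  have hp : p ≠ 0 := ne_zero_of_mem_sphere2 (closure_subset_sphere2 hPA.subset_sphere2 hpA)
  have hac : IsAcute (A ∪ B) := hPA.isAcute.union_of_mem_closure hPB.isAcute hPA.isPreconnected
    hPB.isPreconnected (hF.inner_ne_zero A hA B hB hAB) hpA hpB hp
  have hAH : A ⊆ sphHull (A ∪ B) :=
    subset_union_left.trans (subset_sphHull (union_subset hPA.subset_sphere2 hPB.subset_sphere2))
  have hH : IsAcutePiece (sphHull (A ∪ B)) :=
    ⟨inter_subset_left, sphConvex_sphHull hac, isAcute_sphHull hac,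
      fun h => hPA.measure_ne_zero (measure_mono_null hAH h)⟩
  have hrest : ∀ C ∈ (F.erase A).erase B, C ∈ F ∧ ∀ q ∈ C, ∀ x ∈ sphHull (A ∪ B), ⟪q, x⟫ ≠ 0 := by
    intro C hC
    simp only [Finset.mem_erase] at hC
    obtain ⟨hCB, hCA, hCF⟩ := hC
    exact ⟨hCF, inner_ne_zero_of_mem_sphHull (hF.isAcutePiece C hCF) hPA.isPreconnected
      hPB.isPreconnected hpA hpB hp (hF.inner_ne_zero C hCF A hA hCA)
      (hF.inner_ne_zero C hCF B hB hCB)⟩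
  constructor
  · intro X hX
    rcases Finset.mem_insert.1 hX with rfl | hX
    · exact hH
    · exact hF.isAcutePiece X (hrest X hX).1
  · intro X hX Y hY hXY
    rcases Finset.mem_insert.1 hX with rfl | hX <;> rcases Finset.mem_insert.1 hY with rfl | hY
    · exact (hXY rfl).elim
    · intro a ha b hb
      rw [real_inner_comm]
      exact (hrest Y hY).2 b hb a ha
    · exact (hrest X hX).2
    · exact hF.inner_ne_zero X (hrest X hX).1 Y (hrest Y hY).1 hXY

lemma IsAcuteOPFFamily.exists_separated {F : Finset (Set E3)} (hF : IsAcuteOPFFamily F) :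
    ∃ G : Finset (Set E3), IsAcuteOPFFamily G ∧ G.card ≤ F.card ∧ (∀ S ∈ F, ∃ T ∈ G, S ⊆ T) ∧
      ∀ A ∈ G, ∀ B ∈ G, A ≠ B → 0 < gsetDist A B := by
  induction hn : F.card using Nat.strong_induction_on generalizing F with
  | _ n ih =>
  by_cases hsep : ∀ A ∈ F, ∀ B ∈ F, A ≠ B → 0 < gsetDist A B
  · exact ⟨F, hF, hn.le, fun S hS => ⟨S, hS, subset_rfl⟩, hsep⟩
  push Not at hsep
  obtain ⟨A, hA, B, hB, hAB, hd⟩ := hsep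
  set H := sphHull (A ∪ B)
  have hcard : (insert H ((F.erase A).erase B)).card < n := by
    have hB' : B ∈ F.erase A := Finset.mem_erase.2 ⟨hAB.symm, hB⟩
    have := Finset.card_insert_le H ((F.erase A).erase B)
    rw [Finset.card_erase_of_mem hB', Finset.card_erase_of_mem hA] at this
    have := Finset.one_lt_card.2 ⟨A, hA, B, hB, hAB⟩
    omega
  obtain ⟨G, hG, hGcard, hcover, hGsep⟩ := ih _ hcard (hF.merge hA hB hAB hd) rfl
  refine ⟨G, hG, by omega, fun S hS => ?_, hGsep⟩
  have hSH : ∃ T ∈ insert H ((F.erase A).erase B), S ⊆ T := by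
    have hABH : A ∪ B ⊆ H := subset_sphHull
      (union_subset (hF.isAcutePiece A hA).subset_sphere2 (hF.isAcutePiece B hB).subset_sphere2)
    by_cases hSAB : S = A ∨ S = B
    · refine ⟨H, Finset.mem_insert_self _ _, ?_⟩
      rcases hSAB with rfl | rfl
      exacts [subset_union_left.trans hABH, subset_union_right.trans hABH]
    · push Not at hSAB
      exact ⟨S, Finset.mem_insert_of_mem (by simp [hS, hSAB.1, hSAB.2]), subset_rfl⟩
  obtain ⟨T, hT, hST⟩ := hSH
  obtain ⟨U, hU, hTU⟩ := hcover T hT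
  exact ⟨U, hU, hST.trans hTU⟩

open Classical in
lemma isAcuteOPFFamily_of_nonnull_pieces {ι : Type*} [Fintype ι] {D : ι → Set E3}
    (hN : ⋃ i, D i ⊆ sphere2) (hOPF : OPF (⋃ i, D i)) (hconv : ∀ i, SphConvex (D i))
    (hdisj : Pairwise fun i j => D i ∩ D j = ∅) :
    IsAcuteOPFFamily ((Finset.univ.filter fun i => sigmaM (D i) ≠ 0).image D) := by
  have hDs : ∀ i, D i ⊆ sphere2 := fun i => (subset_iUnion D i).trans hN
  have hDopf : ∀ i, OPF (D i) := fun i => OPF.mono hOPF (subset_iUnion D i)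
  constructor
  · simp only [Finset.mem_image, Finset.mem_filter, Finset.mem_univ, true_and]
    rintro _ ⟨i, hi, rfl⟩
    exact ⟨hDs i, hconv i, isAcute_of_OPF (hDopf i) (hDs i) (hconv i) hi, hi⟩
  · simp only [Finset.mem_image, Finset.mem_filter, Finset.mem_univ, true_and]
    rintro _ ⟨i, -, rfl⟩ _ ⟨j, -, rfl⟩ hij a ha b hb
    have hab : a ≠ b := by
      rintro rfl
      have : a ∈ D i ∩ D j := ⟨ha, hb⟩
      rwa [hdisj (fun h => hij (congrArg D h))] at this
    exact hOPF a (mem_iUnion_of_mem i ha) b (mem_iUnion_of_mem j hb) hab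

lemma IsAcuteOPFFamily.opf_iUnion {G : Finset (Set E3)} (hG : IsAcuteOPFFamily G) {ι : Type*}
    {E : ι → Set E3} (hE : ∀ i, E i ∈ G) : OPF (⋃ i, E i) := by
  intro p hp q hq hpq
  obtain ⟨i, hpi⟩ := mem_iUnion.1 hp
  obtain ⟨j, hqj⟩ := mem_iUnion.1 hq
  by_cases hij : E i = E j
  · exact ((hG.isAcutePiece _ (hE i)).isAcute p hpi q (hij ▸ hqj)).ne'
  · exact hG.inner_ne_zero _ (hE i) _ (hE j) hij p hpi q hqj

lemma inter_eq_empty_of_gsetDist_pos {A B : Set E3} (hA : A ⊆ sphere2) (h : 0 < gsetDist A B) :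
    A ∩ B = ∅ := by
  refine eq_empty_iff_forall_notMem.2 fun x ⟨hxA, hxB⟩ => h.not_ge ?_
  have hle : gsetDist A B ≤ gdist x x :=
    csInf_le ⟨0, by rintro _ ⟨a, -, b, -, rfl⟩; exact Real.arccos_nonneg _⟩
      (mem_image2_of_mem hxA hxB)
  rwa [gdist, rinner, inner_self_of_mem_sphere2 (hA hxA), Real.arccos_one] at hle

lemma muS_mono_of_sigmaM_le {S T : Set E3} (h : sigmaM S ≤ sigmaM T) : muS S ≤ muS T := by
  simp only [muS, Measure.smul_apply, smul_eq_mul]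
  gcongr

end OrthogonalPairFree

open OrthogonalPairFree in
/-- second convexification — one can pass to a union of at most w
spherically convex sets at pairwise positive distance, without losing measure. -/
theorem stmt17 (w : ℕ) (hw : 1 ≤ w) (N₁ : Set E3) (hN : N₁ ⊆ sphere2) (hOPF : OPF N₁)
    (D : Fin w → Set E3) (hconv : ∀ i, SphConvex (D i))
    (hdisj : Pairwise fun i j => D i ∩ D j = ∅)
    (hU : N₁ = ⋃ i, D i) :
    ∃ w' : ℕ, 1 ≤ w' ∧ w' ≤ w ∧ ∃ (N₂ : Set E3) (Ee : Fin w' → Set E3),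
      N₂ ⊆ sphere2 ∧ OPF N₂ ∧ (∀ i, SphConvex (Ee i)) ∧
      (Pairwise fun i j => Ee i ∩ Ee j = ∅) ∧
      (Pairwise fun i j => 0 < gsetDist (Ee i) (Ee j)) ∧
      N₂ = ⋃ i, Ee i ∧ muS N₂ ≥ muS N₁ := by
  classical
  subst hU
  set F := (Finset.univ.filter fun i => sigmaM (D i) ≠ 0).image D
  obtain ⟨G, hG, hcard, hcover, hsep⟩ :=
    (isAcuteOPFFamily_of_nonnull_pieces hN hOPF hconv hdisj).exists_separated
  let e := G.equivFin.symm
  have hmeas : muS (⋃ i, D i) ≤ muS (⋃ k, (e k : Set E3)) := by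
    refine muS_mono_of_sigmaM_le (measure_iUnion_le_of_forall_subset fun i hi => ?_)
    obtain ⟨T, hT, hDT⟩ := hcover (D i) (Finset.mem_image_of_mem D (by simpa using hi))
    exact ⟨G.equivFin ⟨T, hT⟩, by simpa [e] using hDT⟩
  rcases G.eq_empty_or_nonempty with rfl | hne
  · refine ⟨1, le_rfl, hw, ∅, fun _ => ∅, empty_subset _, fun p hp => hp.elim,
      fun _ x hx => hx.elim, Subsingleton.pairwise, Subsingleton.pairwise, by simp, ?_⟩
    simpa using hmeas
  have hcardw : F.card ≤ w :=
    Finset.card_image_le.trans ((Finset.card_filter_le _ _).trans (by simp))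
  have he : ∀ {k l}, k ≠ l → (e k : Set E3) ≠ e l := fun hkl h =>
    hkl (e.injective (Subtype.ext h))
  refine ⟨G.card, hne.card_pos, hcard.trans hcardw, ⋃ k, (e k : Set E3), fun k => e k,
    iUnion_subset fun k => (hG.isAcutePiece _ (e k).2).subset_sphere2,
    hG.opf_iUnion fun k => (e k).2, fun k => (hG.isAcutePiece _ (e k).2).sphConvex,
    fun k l hkl => inter_eq_empty_of_gsetDist_pos (hG.isAcutePiece _ (e k).2).subset_sphere2
      (hsep _ (e k).2 _ (e l).2 (he hkl)),
    fun k l hkl => hsep _ (e k).2 _ (e l).2 (he hkl), rfl, hmeas⟩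
end
end
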